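/- arXiv:1203.3698 — 9 statements merged into one kernel-verified Lean document; each statement's English description precedes it below -/
import Mathlib

section
/- Let f, g be nonnegative convex functions on [a,b] with f, g, fg integrable. Then (1/(b-a)²) ∫_a^b ∫_a^b ∫_0^1 f(tx+(1-t)y) g(tx+(1-t)y) dt dx dy ≤ (1/(3(b-a))) ∫_a^b f(x)g(x) dx + (1/(3(b-a))) ∫_a^b f(y)g(y) dy + (1/(6(b-a)²)) ∫_a^b ∫_a^b [f(x)g(y) + f(y)g(x)] dx dy. -/
open MeasureTheory intervalIntegral

/-- Robust interval-integral monotonicity: no integrability needed for `F`. -/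
lemma intA {a b : ℝ} {F G : ℝ → ℝ} (hab : a ≤ b)
    (hG : IntervalIntegrable G volume a b)
    (hG0 : ∀ x ∈ Set.Icc a b, 0 ≤ G x)
    (hle : ∀ x ∈ Set.Icc a b, F x ≤ G x) :
    (∫ x in a..b, F x) ≤ ∫ x in a..b, G x := by
  by_cases hF : IntervalIntegrable F volume a b
  · exact intervalIntegral.integral_mono_on hab hF hG hle
  · rw [intervalIntegral.integral_undef hF]
    exact intervalIntegral.integral_nonneg hab hG0

lemma quadInt' (A B C : ℝ) :
    (∫ t in (0:ℝ)..1, ((A - B + C)*t^2 + (B - 2*C)*t + C)) = A/3 + B/6 + C/3 := by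
  have hP : ∀ t ∈ Set.uIcc (0:ℝ) 1, HasDerivAt
      (fun u => (A - B + C)/3*u^3 + (B - 2*C)/2*u^2 + C*u)
      ((A - B + C)*t^2 + (B - 2*C)*t + C) t := by
    intro t _
    have h := (((hasDerivAt_pow 3 t).const_mul ((A - B + C)/3)).add
      ((hasDerivAt_pow 2 t).const_mul ((B - 2*C)/2))).add ((hasDerivAt_id t).const_mul C)
    refine h.congr_deriv ?_
    push_cast
    ring
  rw [intervalIntegral.integral_eq_sub_of_hasDerivAt hP ((by fun_prop : Continuous fun t : ℝ => (A - B + C)*t^2 + (B - 2*C)*t + C).intervalIntegrable _ _)]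
  ring

/-- Linear-combination integral. -/
lemma linInt (a b : ℝ) (f g h : ℝ → ℝ) (c0 c1 c2 c3 : ℝ)
    (hh : IntervalIntegrable h volume a b)
    (hf : IntervalIntegrable f volume a b) (hg : IntervalIntegrable g volume a b) :
    (∫ x in a..b, (c0 * h x + c1 * f x + c2 * g x + c3)) =
      c0 * (∫ x in a..b, h x) + c1 * (∫ x in a..b, f x) + c2 * (∫ x in a..b, g x)
        + c3 * (b - a) := by
  rw [intervalIntegral.integral_add (((hh.const_mul c0).add (hf.const_mul c1)).add
        (hg.const_mul c2)) intervalIntegrable_const,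
      intervalIntegral.integral_add ((hh.const_mul c0).add (hf.const_mul c1)) (hg.const_mul c2),
      intervalIntegral.integral_add (hh.const_mul c0) (hf.const_mul c1),
      intervalIntegral.integral_const_mul, intervalIntegral.integral_const_mul,
      intervalIntegral.integral_const_mul, intervalIntegral.integral_const]
  simp [smul_eq_mul]
  ring

theorem stmt4 (a b : ℝ) (f g : ℝ → ℝ) (hab : a < b)
    (hf : ConvexOn ℝ (Set.Icc a b) f) (hg : ConvexOn ℝ (Set.Icc a b) g)
    (hf0 : ∀ x ∈ Set.Icc a b, 0 ≤ f x) (hg0 : ∀ x ∈ Set.Icc a b, 0 ≤ g x)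
    (hfint : IntervalIntegrable f volume a b) (hgint : IntervalIntegrable g volume a b)
    (hfgint : IntervalIntegrable (fun x => f x * g x) volume a b) :
    (1/(b - a)^2) * ∫ y in a..b, ∫ x in a..b, ∫ t in (0:ℝ)..1,
        f (t*x + (1 - t)*y) * g (t*x + (1 - t)*y) ≤
      (1/(3*(b - a))) * (∫ x in a..b, f x * g x) +
      (1/(3*(b - a))) * (∫ y in a..b, f y * g y) +
      (1/(6*(b - a)^2)) * ∫ y in a..b, ∫ x in a..b, (f x * g y + f y * g x) := by
  have hab' : a ≤ b := hab.le
  have hba : (0:ℝ) < b - a := by linarith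
  set If := ∫ x in a..b, f x with hIf
  set Ig := ∫ x in a..b, g x with hIg
  set Ifg := ∫ x in a..b, f x * g x with hIfg
  -- Innermost bound
  have inner : ∀ x ∈ Set.Icc a b, ∀ y ∈ Set.Icc a b,
      (∫ t in (0:ℝ)..1, f (t*x + (1 - t)*y) * g (t*x + (1 - t)*y)) ≤
        (f x * g x)/3 + (f x * g y + f y * g x)/6 + (f y * g y)/3 := by
    intro x hx y hy
    set A := f x * g x
    set B := f x * g y + f y * g x
    set C := f y * g y
    have key : (∫ t in (0:ℝ)..1, f (t*x + (1 - t)*y) * g (t*x + (1 - t)*y)) ≤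
        ∫ t in (0:ℝ)..1, ((A - B + C)*t^2 + (B - 2*C)*t + C) := by
      apply intA zero_le_one ((by fun_prop : Continuous fun t : ℝ => (A - B + C)*t^2 + (B - 2*C)*t + C).intervalIntegrable _ _)
      · intro t ht
        have h1 : 0 ≤ t := ht.1
        have h2 : t ≤ 1 := ht.2
        have := hf0 x hx; have := hg0 x hx; have := hf0 y hy; have := hg0 y hy
        have heq : (A - B + C)*t^2 + (B - 2*C)*t + C
            = (t*f x + (1-t)*f y) * (t*g x + (1-t)*g y) := by simp only [A, B, C]; ring
        rw [heq]
        apply mul_nonneg <;> apply add_nonneg <;>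
          apply mul_nonneg <;> first | assumption | linarith
      · intro t ht
        have h1 : 0 ≤ t := ht.1
        have h2 : t ≤ 1 := ht.2
        have hmem : t*x + (1-t)*y ∈ Set.Icc a b := by
          have := hf.1 hx hy h1 (by linarith : (0:ℝ) ≤ 1 - t) (by ring)
          simpa [smul_eq_mul] using this
        have hfle : f (t*x + (1-t)*y) ≤ t*f x + (1-t)*f y := by
          have := hf.2 hx hy h1 (by linarith : (0:ℝ) ≤ 1 - t) (by ring)
          simpa [smul_eq_mul] using this
        have hgle : g (t*x + (1-t)*y) ≤ t*g x + (1-t)*g y := by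
          have := hg.2 hx hy h1 (by linarith : (0:ℝ) ≤ 1 - t) (by ring)
          simpa [smul_eq_mul] using this
        have hf0' := hf0 _ hmem
        have hg0' := hg0 _ hmem
        have hgb : 0 ≤ t*g x + (1-t)*g y := le_trans hg0' hgle
        have heq : (A - B + C)*t^2 + (B - 2*C)*t + C
            = (t*f x + (1-t)*f y) * (t*g x + (1-t)*g y) := by simp only [A, B, C]; ring
        rw [heq]
        exact mul_le_mul hfle hgle hg0' (le_trans hf0' hfle)
    calc _ ≤ ∫ t in (0:ℝ)..1, ((A - B + C)*t^2 + (B - 2*C)*t + C) := key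
      _ = A/3 + B/6 + C/3 := quadInt' A B C
  -- Middle level: for y ∈ Icc a b
  have middle : ∀ y ∈ Set.Icc a b,
      (∫ x in a..b, ∫ t in (0:ℝ)..1, f (t*x + (1 - t)*y) * g (t*x + (1 - t)*y)) ≤
        ((b-a)/3) * (f y * g y) + (Ig/6) * f y + (If/6) * g y + (1/3)*Ifg := by
    intro y hy
    have hGint : IntervalIntegrable
        (fun x => (1/3) * (f x * g x) + (g y/6) * f x + (f y/6) * g x + (f y * g y/3))
        volume a b :=
      (((hfgint.const_mul _).add (hfint.const_mul _)).add (hgint.const_mul _)).add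
        intervalIntegrable_const
    have step : (∫ x in a..b, ∫ t in (0:ℝ)..1, f (t*x + (1 - t)*y) * g (t*x + (1 - t)*y)) ≤
        ∫ x in a..b, ((1/3) * (f x * g x) + (g y/6) * f x + (f y/6) * g x + (f y * g y/3)) := by
      apply intA hab' hGint
      · intro x hx
        have := hf0 x hx; have := hg0 x hx; have := hf0 y hy; have := hg0 y hy
        have h1 : 0 ≤ f x * g x := mul_nonneg (by assumption) (by assumption)
        have h2 : 0 ≤ f y * g y := mul_nonneg (by assumption) (by assumption)
        have h3 : 0 ≤ g y * f x := mul_nonneg (by assumption) (by assumption)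
        have h4 : 0 ≤ f y * g x := mul_nonneg (by assumption) (by assumption)
        nlinarith
      · intro x hx
        have := inner x hx y hy
        linarith
    rw [linInt a b f g (fun x => f x * g x) (1/3) (g y/6) (f y/6) (f y * g y/3)
        hfgint hfint hgint] at step
    calc _ ≤ _ := step
      _ = ((b-a)/3) * (f y * g y) + (Ig/6) * f y + (If/6) * g y + (1/3)*Ifg := by ring
  -- Nonnegativity of integrals
  have hIf0 : 0 ≤ If := intervalIntegral.integral_nonneg hab' hf0
  have hIg0 : 0 ≤ Ig := intervalIntegral.integral_nonneg hab' hg0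
  have hIfg0 : 0 ≤ Ifg := intervalIntegral.integral_nonneg hab'
    (fun u hu => mul_nonneg (hf0 u hu) (hg0 u hu))
  -- Outer level
  have outer : (∫ y in a..b, ∫ x in a..b, ∫ t in (0:ℝ)..1,
      f (t*x + (1 - t)*y) * g (t*x + (1 - t)*y)) ≤
      ((b-a)/3) * Ifg + (Ig/6) * If + (If/6) * Ig + ((1/3)*Ifg) * (b - a) := by
    have hKint : IntervalIntegrable
        (fun y => ((b-a)/3) * (f y * g y) + (Ig/6) * f y + (If/6) * g y + (1/3)*Ifg)
        volume a b :=
      (((hfgint.const_mul _).add (hfint.const_mul _)).add (hgint.const_mul _)).add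
        intervalIntegrable_const
    have := intA hab' hKint
      (fun y hy => by
        have := hf0 y hy; have := hg0 y hy
        have h2 : 0 ≤ f y * g y := mul_nonneg (by assumption) (by assumption)
        have : 0 ≤ ((b-a)/3) * (f y * g y) := by positivity
        have : 0 ≤ (Ig/6) * f y := by positivity
        have : 0 ≤ (If/6) * g y := by positivity
        linarith)
      middle
    calc _ ≤ _ := this
      _ = _ := linInt a b f g (fun x => f x * g x) ((b-a)/3) (Ig/6) (If/6) ((1/3)*Ifg)
          hfgint hfint hgint
  -- RHS double integral computation
  have rhsInner : ∀ y : ℝ, (∫ x in a..b, (f x * g y + f y * g x)) = g y * If + f y * Ig := by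
    intro y
    rw [intervalIntegral.integral_add (hfint.mul_const _) (hgint.const_mul _),
        intervalIntegral.integral_mul_const, intervalIntegral.integral_const_mul]
    ring
  have rhsDouble : (∫ y in a..b, ∫ x in a..b, (f x * g y + f y * g x)) = 2 * (If * Ig) := by
    rw [intervalIntegral.integral_congr (g := fun y => g y * If + f y * Ig)
        (fun y _ => rhsInner y)]
    rw [intervalIntegral.integral_add (hgint.mul_const _) (hfint.mul_const _),
        intervalIntegral.integral_mul_const, intervalIntegral.integral_mul_const]
    ring
  rw [rhsDouble]
  have hpos : (0:ℝ) ≤ 1/(b-a)^2 := by positivity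
  have := mul_le_mul_of_nonneg_left outer hpos
  calc (1/(b - a)^2) * ∫ y in a..b, ∫ x in a..b, ∫ t in (0:ℝ)..1,
        f (t*x + (1 - t)*y) * g (t*x + (1 - t)*y)
      ≤ (1/(b-a)^2) * (((b-a)/3) * Ifg + (Ig/6) * If + (If/6) * Ig + ((1/3)*Ifg) * (b - a)) :=
        this
    _ = (1/(3*(b - a))) * Ifg + (1/(3*(b - a))) * Ifg + (1/(6*(b - a)^2)) * (2 * (If * Ig)) := by
        field_simp
        ring
end

section
/- Let f, g be (h-s)₂-convex and similarly ordered on I = [a,b], with h nonnegative and super-multiplicative, s ∈ (0,1], and suppose f, g, fg are integrable on [a,b] and the relevant compositions of h integrable on [0,1]. Then (1/(b-a)²) ∫_a^b ∫_a^b ∫_0^1 f(tx+(1-t)y) g(tx+(1-t)y) dt dx dy ≤ ((1/(b-a)) ∫_a^b f(x)g(x) dx)(∫_0^1 (h(t²)^s + h(t-t²)^s) dt) + ((1/(b-a)) ∫_a^b f(y)g(y) dy)(∫_0^1 (h((1-t)²)^s + h(t-t²)^s) dt). -/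
open MeasureTheory intervalIntegral

def HS2ConvexOn (h : ℝ → ℝ) (s : ℝ) (S : Set ℝ) (f : ℝ → ℝ) : Prop :=
  (∀ x ∈ S, 0 ≤ f x) ∧
  ∀ x ∈ S, ∀ y ∈ S, ∀ t ∈ Set.Icc (0:ℝ) 1,
    f (t * x + (1 - t) * y) ≤ h t ^ s * f x + h (1 - t) ^ s * f y

def SimilarlyOrdered (S : Set ℝ) (f g : ℝ → ℝ) : Prop :=
  ∀ x ∈ S, ∀ y ∈ S, 0 ≤ (f x - f y) * (g x - g y)

theorem stmt5 (h : ℝ → ℝ) (s a b : ℝ) (f g : ℝ → ℝ)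
    (hh0 : ∀ t ∈ Set.Icc (0:ℝ) 1, 0 ≤ h t) (hhne : h ≠ 0)
    (hsm : ∀ x ∈ Set.Icc (0:ℝ) 1, ∀ y ∈ Set.Icc (0:ℝ) 1, h x * h y ≤ h (x * y))
    (hs : s ∈ Set.Ioc (0:ℝ) 1) (hab : a < b)
    (hf : HS2ConvexOn h s (Set.Icc a b) f) (hg : HS2ConvexOn h s (Set.Icc a b) g)
    (hso : SimilarlyOrdered (Set.Icc a b) f g)
    (hfint : IntervalIntegrable f volume a b) (hgint : IntervalIntegrable g volume a b)
    (hfgint : IntervalIntegrable (fun x => f x * g x) volume a b)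
    (hh1 : IntervalIntegrable (fun t => h (t^2) ^ s + h (t - t^2) ^ s) volume 0 1)
    (hh2 : IntervalIntegrable (fun t => h ((1 - t)^2) ^ s + h (t - t^2) ^ s) volume 0 1) :
    (1/(b - a)^2) * ∫ y in a..b, ∫ x in a..b, ∫ t in (0:ℝ)..1,
        f (t*x + (1 - t)*y) * g (t*x + (1 - t)*y) ≤
      ((1/(b - a)) * ∫ x in a..b, f x * g x) *
        (∫ t in (0:ℝ)..1, (h (t^2) ^ s + h (t - t^2) ^ s)) +
      ((1/(b - a)) * ∫ y in a..b, f y * g y) *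
        (∫ t in (0:ℝ)..1, (h ((1 - t)^2) ^ s + h (t - t^2) ^ s)) := by
  obtain ⟨hf0, hfc⟩ := hf
  obtain ⟨hg0, hgc⟩ := hg
  have hs0 : (0:ℝ) < s := hs.1
  have hba : (0:ℝ) < b - a := by linarith
  set J : ℝ := ∫ x in a..b, f x * g x with hJdef
  set A1 : ℝ := ∫ t in (0:ℝ)..1, (h (t^2) ^ s + h (t - t^2) ^ s) with hA1def
  set A2 : ℝ := ∫ t in (0:ℝ)..1, (h ((1 - t)^2) ^ s + h (t - t^2) ^ s) with hA2def
  have hmem : ∀ t ∈ Set.Icc (0:ℝ) 1, t^2 ∈ Set.Icc (0:ℝ) 1 ∧ t - t^2 ∈ Set.Icc (0:ℝ) 1 ∧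
      (1-t)^2 ∈ Set.Icc (0:ℝ) 1 ∧ (1-t) ∈ Set.Icc (0:ℝ) 1 := by
    intro t ht
    refine ⟨⟨?_, ?_⟩, ⟨?_, ?_⟩, ⟨?_, ?_⟩, ⟨?_, ?_⟩⟩ <;> nlinarith [ht.1, ht.2]
  have hc1nn : ∀ t ∈ Set.Icc (0:ℝ) 1, 0 ≤ h (t^2) ^ s + h (t - t^2) ^ s := fun t ht =>
    add_nonneg (Real.rpow_nonneg (hh0 _ (hmem t ht).1) s)
      (Real.rpow_nonneg (hh0 _ (hmem t ht).2.1) s)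
  have hc2nn : ∀ t ∈ Set.Icc (0:ℝ) 1, 0 ≤ h ((1-t)^2) ^ s + h (t - t^2) ^ s := fun t ht =>
    add_nonneg (Real.rpow_nonneg (hh0 _ (hmem t ht).2.2.1) s)
      (Real.rpow_nonneg (hh0 _ (hmem t ht).2.1) s)
  have hA1 : 0 ≤ A1 := intervalIntegral.integral_nonneg zero_le_one hc1nn
  have hA2 : 0 ≤ A2 := intervalIntegral.integral_nonneg zero_le_one hc2nn
  have hfgnn : ∀ x ∈ Set.Icc a b, 0 ≤ f x * g x := fun x hx =>
    mul_nonneg (hf0 x hx) (hg0 x hx)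
  have hJ : 0 ≤ J := intervalIntegral.integral_nonneg hab.le hfgnn
  -- key pointwise inequality
  have key : ∀ x ∈ Set.Icc a b, ∀ y ∈ Set.Icc a b, ∀ t ∈ Set.Icc (0:ℝ) 1,
      f (t*x + (1 - t)*y) * g (t*x + (1 - t)*y) ≤
        (f x * g x) * (h (t^2) ^ s + h (t - t^2) ^ s) +
        (f y * g y) * (h ((1-t)^2) ^ s + h (t - t^2) ^ s) := by
    intro x hx y hy t ht
    have hu : t*x + (1 - t)*y ∈ Set.Icc a b := by
      constructor <;> nlinarith [hx.1, hx.2, hy.1, hy.2, ht.1, ht.2]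
    have h1t : (1 - t) ∈ Set.Icc (0:ℝ) 1 := ⟨by linarith [ht.2], by linarith [ht.1]⟩
    have hht : 0 ≤ h t := hh0 t ht
    have hh1t : 0 ≤ h (1 - t) := hh0 _ h1t
    have e1 : h t ^ s * h t ^ s ≤ h (t^2) ^ s := by
      rw [← Real.mul_rpow hht hht]
      apply Real.rpow_le_rpow (mul_nonneg hht hht) _ hs0.le
      have h2 := hsm t ht t ht
      have e : t * t = t^2 := by ring
      rwa [e] at h2
    have e2 : h (1-t) ^ s * h (1-t) ^ s ≤ h ((1-t)^2) ^ s := by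
      rw [← Real.mul_rpow hh1t hh1t]
      apply Real.rpow_le_rpow (mul_nonneg hh1t hh1t) _ hs0.le
      have h2 := hsm (1-t) h1t (1-t) h1t
      have e : (1-t) * (1-t) = (1-t)^2 := by ring
      rwa [e] at h2
    have e3 : h t ^ s * h (1-t) ^ s ≤ h (t - t^2) ^ s := by
      rw [← Real.mul_rpow hht hh1t]
      apply Real.rpow_le_rpow (mul_nonneg hht hh1t) _ hs0.le
      have h2 := hsm t ht (1-t) h1t
      have e : t * (1-t) = t - t^2 := by ring
      rwa [e] at h2
    have hf' := hfc x hx y hy t ht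
    have hg' := hgc x hx y hy t ht
    have hcross := hso x hx y hy
    have hfb : 0 ≤ h t ^ s * f x + h (1 - t) ^ s * f y :=
      add_nonneg (mul_nonneg (Real.rpow_nonneg hht s) (hf0 x hx))
        (mul_nonneg (Real.rpow_nonneg hh1t s) (hf0 y hy))
    have step : f (t*x + (1 - t)*y) * g (t*x + (1 - t)*y) ≤
        (h t ^ s * f x + h (1 - t) ^ s * f y) * (h t ^ s * g x + h (1 - t) ^ s * g y) :=
      mul_le_mul hf' hg' (hg0 _ hu) hfb
    have l2 : f x * g y + f y * g x ≤ f x * g x + f y * g y := by nlinarith [hcross]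
    have hcnn : 0 ≤ f x * g y + f y * g x :=
      add_nonneg (mul_nonneg (hf0 x hx) (hg0 y hy)) (mul_nonneg (hf0 y hy) (hg0 x hx))
    have t1 := mul_le_mul_of_nonneg_right e1 (hfgnn x hx)
    have t2 := mul_le_mul_of_nonneg_right e2 (hfgnn y hy)
    have t3a := mul_le_mul_of_nonneg_right e3 hcnn
    have t3b := mul_le_mul_of_nonneg_left l2 (Real.rpow_nonneg (hh0 _ (hmem t ht).2.1) s)
    nlinarith [step, t1, t2, t3a, t3b]
  -- inner integral bound
  have inner : ∀ x ∈ Set.Icc a b, ∀ y ∈ Set.Icc a b,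
      (∫ t in (0:ℝ)..1, f (t*x + (1 - t)*y) * g (t*x + (1 - t)*y)) ≤
        (f x * g x) * A1 + (f y * g y) * A2 := by
    intro x hx y hy
    have hB1 : IntervalIntegrable (fun t => (f x * g x) * (h (t^2) ^ s + h (t - t^2) ^ s))
        volume 0 1 := hh1.const_mul _
    have hB2 : IntervalIntegrable (fun t => (f y * g y) * (h ((1-t)^2) ^ s + h (t - t^2) ^ s))
        volume 0 1 := hh2.const_mul _
    have hBval : (∫ t in (0:ℝ)..1, ((f x * g x) * (h (t^2) ^ s + h (t - t^2) ^ s) +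
        (f y * g y) * (h ((1-t)^2) ^ s + h (t - t^2) ^ s))) = (f x * g x) * A1 + (f y * g y) * A2 := by
      rw [intervalIntegral.integral_add hB1 hB2, intervalIntegral.integral_const_mul,
        intervalIntegral.integral_const_mul]
    by_cases hFi : IntervalIntegrable (fun t => f (t*x + (1 - t)*y) * g (t*x + (1 - t)*y))
        volume 0 1
    · rw [← hBval]
      exact intervalIntegral.integral_mono_on zero_le_one hFi (hB1.add hB2)
        (fun t ht => key x hx y hy t ht)
    · rw [intervalIntegral.integral_undef hFi]
      exact add_nonneg (mul_nonneg (hfgnn x hx) hA1) (mul_nonneg (hfgnn y hy) hA2)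
  -- middle integral bound
  have middle : ∀ y ∈ Set.Icc a b,
      (∫ x in a..b, ∫ t in (0:ℝ)..1, f (t*x + (1 - t)*y) * g (t*x + (1 - t)*y)) ≤
        J * A1 + (b - a) * ((f y * g y) * A2) := by
    intro y hy
    have hB1 : IntervalIntegrable (fun x => (f x * g x) * A1) volume a b := hfgint.mul_const _
    have hB2 : IntervalIntegrable (fun _ : ℝ => (f y * g y) * A2) volume a b :=
      intervalIntegrable_const
    have hBval : (∫ x in a..b, ((f x * g x) * A1 + (f y * g y) * A2)) =
        J * A1 + (b - a) * ((f y * g y) * A2) := by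
      rw [intervalIntegral.integral_add hB1 hB2, intervalIntegral.integral_mul_const,
        intervalIntegral.integral_const, smul_eq_mul]
    by_cases hIi : IntervalIntegrable
        (fun x => ∫ t in (0:ℝ)..1, f (t*x + (1 - t)*y) * g (t*x + (1 - t)*y)) volume a b
    · rw [← hBval]
      exact intervalIntegral.integral_mono_on hab.le hIi (hB1.add hB2)
        (fun x hx => inner x hx y hy)
    · rw [intervalIntegral.integral_undef hIi]
      exact add_nonneg (mul_nonneg hJ hA1)
        (mul_nonneg hba.le (mul_nonneg (hfgnn y hy) hA2))
  -- outer integral bound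
  have total : (∫ y in a..b, ∫ x in a..b, ∫ t in (0:ℝ)..1,
      f (t*x + (1 - t)*y) * g (t*x + (1 - t)*y)) ≤ (b - a) * (J * A1) + (b - a) * (J * A2) := by
    have hB1 : IntervalIntegrable (fun _ : ℝ => J * A1) volume a b := intervalIntegrable_const
    have hB2 : IntervalIntegrable (fun y => (b - a) * ((f y * g y) * A2)) volume a b := by
      have : IntervalIntegrable (fun y => (f y * g y) * A2) volume a b := hfgint.mul_const _
      exact this.const_mul _
    have hBval : (∫ y in a..b, (J * A1 + (b - a) * ((f y * g y) * A2))) =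
        (b - a) * (J * A1) + (b - a) * (J * A2) := by
      rw [intervalIntegral.integral_add hB1 hB2, intervalIntegral.integral_const, smul_eq_mul,
        intervalIntegral.integral_const_mul, intervalIntegral.integral_mul_const]
    by_cases hIi : IntervalIntegrable
        (fun y => ∫ x in a..b, ∫ t in (0:ℝ)..1,
          f (t*x + (1 - t)*y) * g (t*x + (1 - t)*y)) volume a b
    · rw [← hBval]
      exact intervalIntegral.integral_mono_on hab.le hIi (hB1.add hB2) middle
    · rw [intervalIntegral.integral_undef hIi]
      have : 0 ≤ (b - a) * (J * A1) + (b - a) * (J * A2) := by positivity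
      linarith
  have hmul : (1/(b - a)^2) * (∫ y in a..b, ∫ x in a..b, ∫ t in (0:ℝ)..1,
      f (t*x + (1 - t)*y) * g (t*x + (1 - t)*y)) ≤
      (1/(b - a)^2) * ((b - a) * (J * A1) + (b - a) * (J * A2)) :=
    mul_le_mul_of_nonneg_left total (by positivity)
  have heq : (1/(b - a)^2) * ((b - a) * (J * A1) + (b - a) * (J * A2)) =
      ((1/(b - a)) * J) * A1 + ((1/(b - a)) * J) * A2 := by
    field_simp
  linarith [hmul, heq.le, heq.ge]
end

section
/- Let f, g be (h-s)₂-convex and similarly ordered on [a,b], with h nonnegative and super-multiplicative, s ∈ (0,1]. Then (1/(b-a)²) ∫_a^b ∫_a^b ∫_0^1 f(tx+(1-t)y) g(tx+(1-t)y) dt dx dy ≤ ((1/(b-a)) ∫_a^b f(x)g(x) dx)(∫_0^1 (h(t)^s + h(1-t)^s)² dt). -/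
open MeasureTheory intervalIntegral

theorem stmt6 (h : ℝ → ℝ) (s a b : ℝ) (f g : ℝ → ℝ)
    (hh0 : ∀ t ∈ Set.Icc (0:ℝ) 1, 0 ≤ h t) (hhne : h ≠ 0)
    (hsm : ∀ x ∈ Set.Icc (0:ℝ) 1, ∀ y ∈ Set.Icc (0:ℝ) 1, h x * h y ≤ h (x * y))
    (hs : s ∈ Set.Ioc (0:ℝ) 1) (hab : a < b)
    (hf : HS2ConvexOn h s (Set.Icc a b) f) (hg : HS2ConvexOn h s (Set.Icc a b) g)
    (hso : SimilarlyOrdered (Set.Icc a b) f g)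
    (hfgint : IntervalIntegrable (fun x => f x * g x) volume a b)
    (hhint : IntervalIntegrable (fun t => (h t ^ s + h (1 - t) ^ s)^2) volume 0 1) :
    (1/(b - a)^2) * ∫ y in a..b, ∫ x in a..b, ∫ t in (0:ℝ)..1,
        f (t*x + (1 - t)*y) * g (t*x + (1 - t)*y) ≤
      ((1/(b - a)) * ∫ x in a..b, f x * g x) *
        (∫ t in (0:ℝ)..1, (h t ^ s + h (1 - t) ^ s)^2) := by
  obtain ⟨hfnn, hfc⟩ := hf
  obtain ⟨hgnn, hgc⟩ := hg
  have hba : (0:ℝ) < b - a := by linarith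
  have hCnn : 0 ≤ ∫ t in (0:ℝ)..1, (h t ^ s + h (1 - t) ^ s)^2 :=
    intervalIntegral.integral_nonneg (by norm_num) (fun t _ => sq_nonneg _)
  have hInn : 0 ≤ ∫ x in a..b, f x * g x :=
    intervalIntegral.integral_nonneg hab.le (fun x hx => mul_nonneg (hfnn x hx) (hgnn x hx))
  set C := ∫ t in (0:ℝ)..1, (h t ^ s + h (1 - t) ^ s)^2 with hCdef
  set I := ∫ x in a..b, f x * g x with hIdef
  have hmem : ∀ x ∈ Set.Icc a b, ∀ y ∈ Set.Icc a b, ∀ t ∈ Set.Icc (0:ℝ) 1,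
      t * x + (1 - t) * y ∈ Set.Icc a b := by
    rintro x ⟨hx1, hx2⟩ y ⟨hy1, hy2⟩ t ⟨ht1, ht2⟩
    constructor <;> nlinarith
  have key : ∀ x ∈ Set.Icc a b, ∀ y ∈ Set.Icc a b, ∀ t ∈ Set.Icc (0:ℝ) 1,
      f (t*x + (1 - t)*y) * g (t*x + (1 - t)*y)
        + f ((1 - t)*x + t*y) * g ((1 - t)*x + t*y)
        ≤ (h t ^ s + h (1 - t) ^ s)^2 * (f x * g x + f y * g y) := by
    intro x hx y hy t ht
    have ht' : (1:ℝ) - t ∈ Set.Icc (0:ℝ) 1 := ⟨by linarith [ht.2], by linarith [ht.1]⟩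
    have hα : 0 ≤ h t ^ s := Real.rpow_nonneg (hh0 t ht) s
    have hβ : 0 ≤ h (1 - t) ^ s := Real.rpow_nonneg (hh0 _ ht') s
    have hz1 := hmem x hx y hy t ht
    have hz2 := hmem x hx y hy (1 - t) ht'
    rw [show (1:ℝ) - (1 - t) = t by ring] at hz2
    have hf1 := hfc x hx y hy t ht
    have hg1 := hgc x hx y hy t ht
    have hf2 := hfc x hx y hy (1 - t) ht'
    have hg2 := hgc x hx y hy (1 - t) ht'
    rw [show (1:ℝ) - (1 - t) = t by ring] at hf2 hg2
    have hb1 : f (t*x + (1 - t)*y) * g (t*x + (1 - t)*y)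
        ≤ (h t ^ s * f x + h (1 - t) ^ s * f y) * (h t ^ s * g x + h (1 - t) ^ s * g y) :=
      mul_le_mul hf1 hg1 (hgnn _ hz1)
        (add_nonneg (mul_nonneg hα (hfnn x hx)) (mul_nonneg hβ (hfnn y hy)))
    have hb2 : f ((1 - t)*x + t*y) * g ((1 - t)*x + t*y)
        ≤ (h (1 - t) ^ s * f x + h t ^ s * f y) * (h (1 - t) ^ s * g x + h t ^ s * g y) :=
      mul_le_mul hf2 hg2 (hgnn _ hz2)
        (add_nonneg (mul_nonneg hβ (hfnn x hx)) (mul_nonneg hα (hfnn y hy)))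
    have hord := hso x hx y hy
    nlinarith [mul_nonneg (mul_nonneg hα hβ) hord]
  have inner : ∀ x ∈ Set.Icc a b, ∀ y ∈ Set.Icc a b,
      (∫ t in (0:ℝ)..1, f (t*x + (1 - t)*y) * g (t*x + (1 - t)*y))
        ≤ C / 2 * (f x * g x + f y * g y) := by
    intro x hx y hy
    have hFx : 0 ≤ f x * g x := mul_nonneg (hfnn x hx) (hgnn x hx)
    have hFy : 0 ≤ f y * g y := mul_nonneg (hfnn y hy) (hgnn y hy)
    by_cases hint : IntervalIntegrable
        (fun t => f (t*x + (1 - t)*y) * g (t*x + (1 - t)*y)) volume 0 1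
    · have hint' : IntervalIntegrable
          (fun t => f ((1 - t)*x + t*y) * g ((1 - t)*x + t*y)) volume 0 1 := by
        have := (hint.comp_sub_left 1).symm
        simpa [sub_sub_cancel] using this
      have heq : (∫ t in (0:ℝ)..1, f ((1 - t)*x + t*y) * g ((1 - t)*x + t*y))
          = ∫ t in (0:ℝ)..1, f (t*x + (1 - t)*y) * g (t*x + (1 - t)*y) := by
        have := intervalIntegral.integral_comp_sub_left (a := (0:ℝ)) (b := 1)
          (fun t => f (t*x + (1 - t)*y) * g (t*x + (1 - t)*y)) 1
        simpa [sub_sub_cancel] using this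
      have hmono := intervalIntegral.integral_mono_on (by norm_num : (0:ℝ) ≤ 1)
        (hint.add hint') (hhint.mul_const (f x * g x + f y * g y))
        (fun t ht => key x hx y hy t ht)
      rw [intervalIntegral.integral_add hint hint', heq,
        intervalIntegral.integral_mul_const] at hmono
      rw [hCdef]
      linarith
    · rw [intervalIntegral.integral_undef hint]
      exact mul_nonneg (by linarith) (add_nonneg hFx hFy)
  have mid : ∀ y ∈ Set.Icc a b,
      (∫ x in a..b, ∫ t in (0:ℝ)..1, f (t*x + (1 - t)*y) * g (t*x + (1 - t)*y))
        ≤ C / 2 * (I + (b - a) * (f y * g y)) := by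
    intro y hy
    have hFy : 0 ≤ f y * g y := mul_nonneg (hfnn y hy) (hgnn y hy)
    by_cases hint : IntervalIntegrable
        (fun x => ∫ t in (0:ℝ)..1, f (t*x + (1 - t)*y) * g (t*x + (1 - t)*y)) volume a b
    · have hdom : IntervalIntegrable
          (fun x => C / 2 * (f x * g x + f y * g y)) volume a b :=
        (hfgint.add intervalIntegrable_const).const_mul _
      have hmono := intervalIntegral.integral_mono_on hab.le hint hdom
        (fun x hx => inner x hx y hy)
      have hcalc : (∫ x in a..b, C / 2 * (f x * g x + f y * g y))
          = C / 2 * (I + (b - a) * (f y * g y)) := by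
        rw [intervalIntegral.integral_const_mul,
          intervalIntegral.integral_add hfgint intervalIntegrable_const,
          intervalIntegral.integral_const, smul_eq_mul, hIdef]
      linarith
    · rw [intervalIntegral.integral_undef hint]
      exact mul_nonneg (by linarith) (add_nonneg hInn (mul_nonneg hba.le hFy))
  have outer : (∫ y in a..b, ∫ x in a..b, ∫ t in (0:ℝ)..1,
        f (t*x + (1 - t)*y) * g (t*x + (1 - t)*y)) ≤ C * ((b - a) * I) := by
    by_cases hint : IntervalIntegrable
        (fun y => ∫ x in a..b, ∫ t in (0:ℝ)..1,
          f (t*x + (1 - t)*y) * g (t*x + (1 - t)*y)) volume a b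
    · have hdom : IntervalIntegrable
          (fun y => C / 2 * (I + (b - a) * (f y * g y))) volume a b :=
        (intervalIntegrable_const.add (hfgint.const_mul _)).const_mul _
      have hmono := intervalIntegral.integral_mono_on hab.le hint hdom
        (fun y hy => mid y hy)
      have hcalc : (∫ y in a..b, C / 2 * (I + (b - a) * (f y * g y)))
          = C * ((b - a) * I) := by
        rw [intervalIntegral.integral_const_mul,
          intervalIntegral.integral_add intervalIntegrable_const (hfgint.const_mul _),
          intervalIntegral.integral_const, intervalIntegral.integral_const_mul,
          smul_eq_mul, hIdef]
        ring
      linarith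
    · rw [intervalIntegral.integral_undef hint]
      exact mul_nonneg hCnn (mul_nonneg hba.le hInn)
  calc (1/(b - a)^2) * ∫ y in a..b, ∫ x in a..b, ∫ t in (0:ℝ)..1,
        f (t*x + (1 - t)*y) * g (t*x + (1 - t)*y)
      ≤ (1/(b - a)^2) * (C * ((b - a) * I)) :=
        mul_le_mul_of_nonneg_left outer (by positivity)
    _ = ((1/(b - a)) * I) * C := by field_simp
end

section
/- Let f, g be (h-s)₂-convex and similarly ordered on [a,b], with h nonnegative and super-multiplicative, s ∈ (0,1], and all relevant integrals existing. Then (1/(b-a)) ∫_a^b ∫_0^1 f(tx+(1-t)(a+b)/2) g(tx+(1-t)(a+b)/2) dt dx ≤ ((1/(b-a)) ∫_a^b f(x)g(x) dx)(∫_0^1 (h(t²)^s + h(t-t²)^s) dt) + f((a+b)/2) g((a+b)/2) (∫_0^1 (h((1-t)²)^s + h(t-t²)^s) dt). -/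
open MeasureTheory intervalIntegral

theorem stmt7 (h : ℝ → ℝ) (s a b : ℝ) (f g : ℝ → ℝ)
    (hh0 : ∀ t ∈ Set.Icc (0:ℝ) 1, 0 ≤ h t) (hhne : h ≠ 0)
    (hsm : ∀ x ∈ Set.Icc (0:ℝ) 1, ∀ y ∈ Set.Icc (0:ℝ) 1, h x * h y ≤ h (x * y))
    (hs : s ∈ Set.Ioc (0:ℝ) 1) (hab : a < b)
    (hf : HS2ConvexOn h s (Set.Icc a b) f) (hg : HS2ConvexOn h s (Set.Icc a b) g)
    (hso : SimilarlyOrdered (Set.Icc a b) f g)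
    (hfgint : IntervalIntegrable (fun x => f x * g x) volume a b)
    (hh1 : IntervalIntegrable (fun t => h (t^2) ^ s + h (t - t^2) ^ s) volume 0 1)
    (hh2 : IntervalIntegrable (fun t => h ((1 - t)^2) ^ s + h (t - t^2) ^ s) volume 0 1) :
    (1/(b - a)) * ∫ x in a..b, ∫ t in (0:ℝ)..1,
        f (t*x + (1 - t)*((a + b)/2)) * g (t*x + (1 - t)*((a + b)/2)) ≤
      ((1/(b - a)) * ∫ x in a..b, f x * g x) *
        (∫ t in (0:ℝ)..1, (h (t^2) ^ s + h (t - t^2) ^ s)) +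
      f ((a + b)/2) * g ((a + b)/2) *
        (∫ t in (0:ℝ)..1, (h ((1 - t)^2) ^ s + h (t - t^2) ^ s)) := by
  obtain ⟨hs0, hs1⟩ := hs
  obtain ⟨hf0, hfc⟩ := hf
  obtain ⟨hg0, hgc⟩ := hg
  set m : ℝ := (a + b)/2 with hm
  have hmmem : m ∈ Set.Icc a b := ⟨by rw [hm]; linarith, by rw [hm]; linarith⟩
  set A : ℝ := ∫ t in (0:ℝ)..1, (h (t^2) ^ s + h (t - t^2) ^ s) with hA
  set B : ℝ := ∫ t in (0:ℝ)..1, (h ((1 - t)^2) ^ s + h (t - t^2) ^ s) with hB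
  -- nonnegativity of the coefficient functions on [0,1]
  have hcoef1 : ∀ t ∈ Set.Icc (0:ℝ) 1, 0 ≤ h (t^2) ^ s + h (t - t^2) ^ s := by
    intro t ht
    have h1 : (0:ℝ) ≤ h (t^2) := hh0 _ ⟨by nlinarith [ht.1, ht.2], by nlinarith [ht.1, ht.2]⟩
    have h2 : (0:ℝ) ≤ h (t - t^2) := hh0 _ ⟨by nlinarith [ht.1, ht.2], by nlinarith [ht.1, ht.2]⟩
    exact add_nonneg (Real.rpow_nonneg h1 s) (Real.rpow_nonneg h2 s)
  have hcoef2 : ∀ t ∈ Set.Icc (0:ℝ) 1, 0 ≤ h ((1 - t)^2) ^ s + h (t - t^2) ^ s := by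
    intro t ht
    have h1 : (0:ℝ) ≤ h ((1 - t)^2) := hh0 _ ⟨by nlinarith [ht.1, ht.2], by nlinarith [ht.1, ht.2]⟩
    have h2 : (0:ℝ) ≤ h (t - t^2) := hh0 _ ⟨by nlinarith [ht.1, ht.2], by nlinarith [ht.1, ht.2]⟩
    exact add_nonneg (Real.rpow_nonneg h1 s) (Real.rpow_nonneg h2 s)
  have hA0 : 0 ≤ A := by
    rw [hA]
    apply intervalIntegral.integral_nonneg (by norm_num)
    intro t ht; exact hcoef1 t ht
  have hB0 : 0 ≤ B := by
    rw [hB]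
    apply intervalIntegral.integral_nonneg (by norm_num)
    intro t ht; exact hcoef2 t ht
  have hfgm : 0 ≤ f m * g m := mul_nonneg (hf0 m hmmem) (hg0 m hmmem)
  have hba : (0:ℝ) < b - a := by linarith
  have hba' : (0:ℝ) ≤ 1/(b - a) := by positivity
  -- the key pointwise inequality
  have key : ∀ x ∈ Set.Icc a b, ∀ t ∈ Set.Icc (0:ℝ) 1,
      f (t*x + (1 - t)*m) * g (t*x + (1 - t)*m) ≤
        (h (t^2) ^ s + h (t - t^2) ^ s) * (f x * g x) +
        (h ((1 - t)^2) ^ s + h (t - t^2) ^ s) * (f m * g m) := by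
    intro x hx t ht
    obtain ⟨ht0, ht1⟩ := ht
    have htm : t ∈ Set.Icc (0:ℝ) 1 := ⟨ht0, ht1⟩
    have h1t : (1 - t) ∈ Set.Icc (0:ℝ) 1 := ⟨by linarith, by linarith⟩
    have humem : t*x + (1 - t)*m ∈ Set.Icc a b := by
      constructor
      · nlinarith [hx.1, hx.2, hmmem.1, hmmem.2]
      · nlinarith [hx.1, hx.2, hmmem.1, hmmem.2]
    have hht : 0 ≤ h t := hh0 t htm
    have hh1t : 0 ≤ h (1 - t) := hh0 (1 - t) h1t
    have hα : 0 ≤ h t ^ s := Real.rpow_nonneg hht s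
    have hβ : 0 ≤ h (1 - t) ^ s := Real.rpow_nonneg hh1t s
    have hfu := hfc x hx m hmmem t htm
    have hgu := hgc x hx m hmmem t htm
    have hfx := hf0 x hx
    have hfm := hf0 m hmmem
    have hgx := hg0 x hx
    have hgm := hg0 m hmmem
    have hfu0 := hf0 _ humem
    have hgu0 := hg0 _ humem
    have hprod : f (t*x + (1 - t)*m) * g (t*x + (1 - t)*m) ≤
        (h t ^ s * f x + h (1 - t) ^ s * f m) * (h t ^ s * g x + h (1 - t) ^ s * g m) := by
      apply mul_le_mul hfu hgu hgu0
      positivity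
    have hord := hso x hx m hmmem
    have hsq1 : (h t ^ s) * (h t ^ s) ≤ h (t^2) ^ s := by
      rw [← Real.mul_rpow hht hht]
      have h2 : h t * h t ≤ h (t * t) := hsm t htm t htm
      have : h (t * t) = h (t^2) := by ring_nf
      rw [← this]
      exact Real.rpow_le_rpow (mul_nonneg hht hht) h2 hs0.le
    have hsq2 : (h (1 - t) ^ s) * (h (1 - t) ^ s) ≤ h ((1 - t)^2) ^ s := by
      rw [← Real.mul_rpow hh1t hh1t]
      have h2 : h (1 - t) * h (1 - t) ≤ h ((1 - t) * (1 - t)) := hsm (1 - t) h1t (1 - t) h1t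
      have : h ((1 - t) * (1 - t)) = h ((1 - t)^2) := by ring_nf
      rw [← this]
      exact Real.rpow_le_rpow (mul_nonneg hh1t hh1t) h2 hs0.le
    have hcr : (h t ^ s) * (h (1 - t) ^ s) ≤ h (t - t^2) ^ s := by
      rw [← Real.mul_rpow hht hh1t]
      have h2 : h t * h (1 - t) ≤ h (t * (1 - t)) := hsm t htm (1 - t) h1t
      have : h (t * (1 - t)) = h (t - t^2) := by ring_nf
      rw [← this]
      exact Real.rpow_le_rpow (mul_nonneg hht hh1t) h2 hs0.le
    nlinarith [hprod, mul_nonneg (mul_nonneg hα hβ) hord,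
      mul_le_mul_of_nonneg_right hsq1 (mul_nonneg hfx hgx),
      mul_le_mul_of_nonneg_right hsq2 (mul_nonneg hfm hgm),
      mul_le_mul_of_nonneg_right hcr (add_nonneg (mul_nonneg hfx hgx) (mul_nonneg hfm hgm))]
  -- inner integral bound
  have inner : ∀ x ∈ Set.Icc a b,
      (∫ t in (0:ℝ)..1, f (t*x + (1 - t)*m) * g (t*x + (1 - t)*m)) ≤
        (f x * g x) * A + (f m * g m) * B := by
    intro x hx
    have hfgx : 0 ≤ f x * g x := mul_nonneg (hf0 x hx) (hg0 x hx)
    have hψint : IntervalIntegrable (fun t =>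
        (h (t^2) ^ s + h (t - t^2) ^ s) * (f x * g x) +
        (h ((1 - t)^2) ^ s + h (t - t^2) ^ s) * (f m * g m)) volume 0 1 :=
      (hh1.mul_const _).add (hh2.mul_const _)
    by_cases hφ : IntervalIntegrable
        (fun t => f (t*x + (1 - t)*m) * g (t*x + (1 - t)*m)) volume 0 1
    · have hmono := intervalIntegral.integral_mono_on (by norm_num : (0:ℝ) ≤ 1) hφ hψint
        (fun t ht => key x hx t ht)
      calc (∫ t in (0:ℝ)..1, f (t*x + (1 - t)*m) * g (t*x + (1 - t)*m))
          ≤ ∫ t in (0:ℝ)..1, ((h (t^2) ^ s + h (t - t^2) ^ s) * (f x * g x) +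
              (h ((1 - t)^2) ^ s + h (t - t^2) ^ s) * (f m * g m)) := hmono
        _ = (f x * g x) * A + (f m * g m) * B := by
            rw [intervalIntegral.integral_add (hh1.mul_const _) (hh2.mul_const _),
              intervalIntegral.integral_mul_const, intervalIntegral.integral_mul_const,
              hA, hB]
            ring
    · rw [intervalIntegral.integral_undef hφ]
      exact add_nonneg (mul_nonneg hfgx hA0) (mul_nonneg hfgm hB0)
  -- outer integral
  set F : ℝ → ℝ := fun x => ∫ t in (0:ℝ)..1, f (t*x + (1 - t)*m) * g (t*x + (1 - t)*m)
    with hF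
  have hGint : IntervalIntegrable (fun x => (f x * g x) * A + (f m * g m) * B) volume a b :=
    (hfgint.mul_const _).add intervalIntegrable_const
  have hfgnn : 0 ≤ ∫ x in a..b, f x * g x := by
    apply intervalIntegral.integral_nonneg hab.le
    intro x hx; exact mul_nonneg (hf0 x hx) (hg0 x hx)
  by_cases hFint : IntervalIntegrable F volume a b
  · have houter : (∫ x in a..b, F x) ≤
        ∫ x in a..b, ((f x * g x) * A + (f m * g m) * B) :=
      intervalIntegral.integral_mono_on hab.le hFint hGint inner
    have hGval : (∫ x in a..b, ((f x * g x) * A + (f m * g m) * B)) =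
        (∫ x in a..b, f x * g x) * A + (b - a) * ((f m * g m) * B) := by
      rw [intervalIntegral.integral_add (hfgint.mul_const _) intervalIntegrable_const,
        intervalIntegral.integral_mul_const, intervalIntegral.integral_const]
      simp [smul_eq_mul]
    have hfinal : (∫ x in a..b, F x) ≤
        (∫ x in a..b, f x * g x) * A + (b - a) * ((f m * g m) * B) := by
      rw [← hGval]; exact houter
    have := mul_le_mul_of_nonneg_left hfinal hba'
    calc (1/(b - a)) * ∫ x in a..b, F x
        ≤ (1/(b - a)) * ((∫ x in a..b, f x * g x) * A + (b - a) * ((f m * g m) * B)) := this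
      _ = ((1/(b - a)) * ∫ x in a..b, f x * g x) * A + (f m * g m) * B := by
          field_simp
  · have : (∫ x in a..b, F x) = 0 := intervalIntegral.integral_undef hFint
    rw [this, mul_zero]
    exact add_nonneg (mul_nonneg (mul_nonneg hba' hfgnn) hA0) (mul_nonneg hfgm hB0)
end

section
/- Let f, g be (h-s)₂-convex and similarly ordered on [a,b], h nonnegative super-multiplicative, s ∈ (0,1]. Then f((a+b)/2) · g((a+b)/2) ≤ 2 h(1/4)^s · M(a,b) · ∫_0^1 (h(t)^s + h(1-t)^s)² dt, where M(a,b) = f(a)g(a) + f(b)g(b). -/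
open MeasureTheory intervalIntegral

set_option maxHeartbeats 1000000 in
theorem stmt8 (h : ℝ → ℝ) (s a b : ℝ) (f g : ℝ → ℝ)
    (hh0 : ∀ t ∈ Set.Icc (0:ℝ) 1, 0 ≤ h t) (hhne : h ≠ 0)
    (hsm : ∀ x ∈ Set.Icc (0:ℝ) 1, ∀ y ∈ Set.Icc (0:ℝ) 1, h x * h y ≤ h (x * y))
    (hs : s ∈ Set.Ioc (0:ℝ) 1) (hab : a < b)
    (hf : HS2ConvexOn h s (Set.Icc a b) f) (hg : HS2ConvexOn h s (Set.Icc a b) g)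
    (hso : SimilarlyOrdered (Set.Icc a b) f g)
    (hhint : IntervalIntegrable (fun t => (h t ^ s + h (1 - t) ^ s)^2) volume 0 1) :
    f ((a + b)/2) * g ((a + b)/2) ≤
      2 * h (1/4) ^ s * (f a * g a + f b * g b) *
        ∫ t in (0:ℝ)..1, (h t ^ s + h (1 - t) ^ s)^2 := by
  obtain ⟨hs0, hs1⟩ := hs
  obtain ⟨hfpos, hfconv⟩ := hf
  obtain ⟨hgpos, hgconv⟩ := hg
  have hamem : a ∈ Set.Icc a b := ⟨le_refl a, le_of_lt hab⟩
  have hbmem : b ∈ Set.Icc a b := ⟨le_of_lt hab, le_refl b⟩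
  have hfa := hfpos a hamem
  have hfb := hfpos b hbmem
  have hga := hgpos a hamem
  have hgb := hgpos b hbmem
  have hMnn : 0 ≤ f a * g a + f b * g b := by positivity
  have hhalf : (0:ℝ) ≤ h (1/2) := hh0 _ ⟨by norm_num, by norm_num⟩
  have hq : (0:ℝ) ≤ h (1/4) ^ s := Real.rpow_nonneg (hh0 _ ⟨by norm_num, by norm_num⟩) s
  have hc : (0:ℝ) ≤ h (1/2) ^ s := Real.rpow_nonneg hhalf s
  have hhs : h (1/2) ^ s * h (1/2) ^ s ≤ h (1/4) ^ s := by
    rw [← Real.mul_rpow hhalf hhalf]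
    apply Real.rpow_le_rpow (mul_nonneg hhalf hhalf) _ (le_of_lt hs0)
    have := hsm (1/2) ⟨by norm_num, by norm_num⟩ (1/2) ⟨by norm_num, by norm_num⟩
    norm_num at this ⊢
    linarith
  have key : ∀ t ∈ Set.Icc (0:ℝ) 1, f ((a+b)/2) * g ((a+b)/2) ≤
      2 * h (1/4) ^ s * (f a * g a + f b * g b) * (h t ^ s + h (1 - t) ^ s)^2 := by
    intro t ht
    obtain ⟨ht0, ht1⟩ := ht
    have ht1' : (0:ℝ) ≤ 1 - t := by linarith
    have humem : t*a + (1-t)*b ∈ Set.Icc a b := ⟨by nlinarith, by nlinarith⟩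
    have hvmem : (1-t)*a + t*b ∈ Set.Icc a b := ⟨by nlinarith, by nlinarith⟩
    have hA : (0:ℝ) ≤ h t ^ s := Real.rpow_nonneg (hh0 t ⟨ht0, ht1⟩) s
    have hB : (0:ℝ) ≤ h (1-t) ^ s := Real.rpow_nonneg (hh0 (1-t) ⟨by linarith, by linarith⟩) s
    have hfu := hfconv a hamem b hbmem t ⟨ht0, ht1⟩
    have hgu := hgconv a hamem b hbmem t ⟨ht0, ht1⟩
    have hfv := hfconv a hamem b hbmem (1-t) ⟨by linarith, by linarith⟩
    have hgv := hgconv a hamem b hbmem (1-t) ⟨by linarith, by linarith⟩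
    have e1 : (1:ℝ) - (1-t) = t := by ring
    rw [e1] at hfv hgv
    have hfm := hfconv (t*a + (1-t)*b) humem ((1-t)*a + t*b) hvmem (1/2) ⟨by norm_num, by norm_num⟩
    have hgm := hgconv (t*a + (1-t)*b) humem ((1-t)*a + t*b) hvmem (1/2) ⟨by norm_num, by norm_num⟩
    have e2 : (1/2:ℝ) * (t*a + (1-t)*b) + (1 - 1/2) * ((1-t)*a + t*b) = (a+b)/2 := by ring
    have e3 : (1:ℝ) - 1/2 = 1/2 := by norm_num
    rw [e2, e3] at hfm hgm
    have hfupos := hfpos _ humem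
    have hfvpos := hfpos _ hvmem
    have hgupos := hgpos _ humem
    have hgvpos := hgpos _ hvmem
    have hgmpos := hgpos ((a+b)/2) ⟨by linarith, by linarith⟩
    have hso1 := hso _ humem _ hvmem
    have hso2 := hso a hamem b hbmem
    set A := h t ^ s
    set B := h (1-t) ^ s
    set c := h (1/2) ^ s
    set fu := f (t*a + (1-t)*b)
    set fv := f ((1-t)*a + t*b)
    set gu := g (t*a + (1-t)*b)
    set gv := g ((1-t)*a + t*b)
    have step1 : f ((a+b)/2) * g ((a+b)/2) ≤
        (c * fu + c * fv) * (c * gu + c * gv) := by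
      apply mul_le_mul hfm hgm hgmpos
      positivity
    have step3 : fu * gu ≤ (A * f a + B * f b) * (A * g a + B * g b) := by
      apply mul_le_mul hfu hgu hgupos
      positivity
    have step4 : fv * gv ≤ (B * f a + A * f b) * (B * g a + A * g b) := by
      apply mul_le_mul hfv hgv hgvpos
      positivity
    calc f ((a+b)/2) * g ((a+b)/2)
        ≤ (c * fu + c * fv) * (c * gu + c * gv) := step1
      _ = c * c * ((fu + fv) * (gu + gv)) := by ring
      _ ≤ c * c * (2 * (fu * gu + fv * gv)) := by
          apply mul_le_mul_of_nonneg_left _ (mul_nonneg hc hc)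
          linarith [hso1]
      _ ≤ c * c * (2 * ((A * f a + B * f b) * (A * g a + B * g b)
            + (B * f a + A * f b) * (B * g a + A * g b))) := by
          apply mul_le_mul_of_nonneg_left _ (mul_nonneg hc hc)
          linarith [step3, step4]
      _ ≤ c * c * (2 * ((A + B)^2 * (f a * g a + f b * g b))) := by
          apply mul_le_mul_of_nonneg_left _ (mul_nonneg hc hc)
          linarith [mul_nonneg (mul_nonneg hA hB) hso2]
      _ ≤ h (1/4) ^ s * (2 * ((A + B)^2 * (f a * g a + f b * g b))) := by
          apply mul_le_mul_of_nonneg_right hhs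
          positivity
      _ = 2 * h (1/4) ^ s * (f a * g a + f b * g b) * (A + B)^2 := by ring
  have hconst : IntervalIntegrable (fun _ : ℝ => f ((a+b)/2) * g ((a+b)/2)) volume 0 1 :=
    intervalIntegrable_const
  have hrhs : IntervalIntegrable (fun t => 2 * h (1/4) ^ s * (f a * g a + f b * g b) * (h t ^ s + h (1 - t) ^ s)^2) volume 0 1 := by
    simpa [mul_assoc] using hhint.const_mul (2 * h (1/4) ^ s * (f a * g a + f b * g b))
  have hmono := intervalIntegral.integral_mono_on (by norm_num : (0:ℝ) ≤ 1) hconst hrhs key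
  rw [intervalIntegral.integral_const] at hmono
  rw [intervalIntegral.integral_const_mul] at hmono
  simpa using hmono
end

section
/- Let f, g be (h-s)₂-convex and similarly ordered on [a,b], h nonnegative super-multiplicative with h(1/2) > 0, s ∈ (0,1], and fg integrable. Then (1/(2 h(1/2)^(2s))) f((a+b)/2) g((a+b)/2) ≤ (1/(b-a)) ∫_a^b f(x)g(x) dx + (M(a,b)/2) ∫_0^1 (h(t)^s + h(1-t)^s)² dt, where M(a,b) = f(a)g(a) + f(b)g(b). -/
open MeasureTheory intervalIntegral

set_option maxHeartbeats 1000000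

private lemma quad_aux (A B fa fb ga gb Fu Fv : ℝ) (hA : 0 ≤ A) (hB : 0 ≤ B)
    (hPu : Fu ≤ (A*fa+B*fb)*(A*ga+B*gb)) (hPv : Fv ≤ (B*fa+A*fb)*(B*ga+A*gb))
    (hcross : fa*gb + fb*ga ≤ fa*ga + fb*gb) :
    Fu + Fv ≤ (A+B)^2*(fa*ga+fb*gb) := by
  nlinarith [mul_nonneg hA hB, mul_le_mul_of_nonneg_left hcross (mul_nonneg hA hB)]

private lemma fin_aux (H Fm fu fv gu gv K M : ℝ) (hH : 0 < H)
    (hFm : Fm ≤ (H*(fu+fv))*(H*(gu+gv)))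
    (hcross : fu*gv+fv*gu ≤ fu*gu+fv*gv)
    (hS : fu*gu+fv*gv ≤ K*M) :
    Fm ≤ 2*H^2*((1/2)*(fu*gu+fv*gv) + (M/2)*K) := by
  nlinarith [mul_le_mul_of_nonneg_left hcross (sq_nonneg H),
    mul_le_mul_of_nonneg_left hS (sq_nonneg H)]

theorem stmt9 (h : ℝ → ℝ) (s a b : ℝ) (f g : ℝ → ℝ)
    (hh0 : ∀ t ∈ Set.Icc (0:ℝ) 1, 0 ≤ h t) (hhne : h ≠ 0)
    (hsm : ∀ x ∈ Set.Icc (0:ℝ) 1, ∀ y ∈ Set.Icc (0:ℝ) 1, h x * h y ≤ h (x * y))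
    (hhalf : 0 < h (1/2))
    (hs : s ∈ Set.Ioc (0:ℝ) 1) (hab : a < b)
    (hf : HS2ConvexOn h s (Set.Icc a b) f) (hg : HS2ConvexOn h s (Set.Icc a b) g)
    (hso : SimilarlyOrdered (Set.Icc a b) f g)
    (hfgint : IntervalIntegrable (fun x => f x * g x) volume a b)
    (hhint : IntervalIntegrable (fun t => (h t ^ s + h (1 - t) ^ s)^2) volume 0 1) :
    (1/(2 * h (1/2) ^ (2*s))) * (f ((a + b)/2) * g ((a + b)/2)) ≤
      (1/(b - a)) * (∫ x in a..b, f x * g x) +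
      ((f a * g a + f b * g b)/2) * ∫ t in (0:ℝ)..1, (h t ^ s + h (1 - t) ^ s)^2 := by
  have hab' : b - a ≠ 0 := by linarith
  have hab'' : a - b ≠ 0 := by linarith
  have hmemA : a ∈ Set.Icc a b := ⟨le_refl a, le_of_lt hab⟩
  have hmemB : b ∈ Set.Icc a b := ⟨le_of_lt hab, le_refl b⟩
  have hH : (0:ℝ) < h (1/2) ^ s := Real.rpow_pos_of_pos hhalf s
  have hp : h (1/2) ^ (2*s) = (h (1/2) ^ s)^2 := by
    rw [two_mul, Real.rpow_add hhalf, sq]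
  set M : ℝ := f a * g a + f b * g b with hM
  set c0 : ℝ := (1/(2 * h (1/2) ^ (2*s))) * (f ((a + b)/2) * g ((a + b)/2)) with hc0
  -- pointwise inequality
  have key : ∀ t ∈ Set.Icc (0:ℝ) 1,
      c0 ≤ (1/2) * (f (t*a+(1-t)*b) * g (t*a+(1-t)*b) + f ((1-t)*a+t*b) * g ((1-t)*a+t*b))
        + (M/2) * (h t ^ s + h (1 - t) ^ s)^2 := by
    intro t ht
    obtain ⟨ht0, ht1⟩ := ht
    have ht1' : (1 - t) ∈ Set.Icc (0:ℝ) 1 := ⟨by linarith, by linarith⟩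
    have hu : t*a+(1-t)*b ∈ Set.Icc a b := by
      constructor <;> nlinarith
    have hv : (1-t)*a+t*b ∈ Set.Icc a b := by
      constructor <;> nlinarith
    set u := t*a+(1-t)*b
    set v := (1-t)*a+t*b
    have hA : (0:ℝ) ≤ h t ^ s := Real.rpow_nonneg (hh0 t ⟨ht0, ht1⟩) s
    have hB : (0:ℝ) ≤ h (1-t) ^ s := Real.rpow_nonneg (hh0 (1-t) ht1') s
    have hfa := hf.1 a hmemA
    have hfb := hf.1 b hmemB
    have hga := hg.1 a hmemA
    have hgb := hg.1 b hmemB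
    have hfu := hf.1 u hu
    have hfv := hf.1 v hv
    have hgu := hg.1 u hu
    have hgv := hg.1 v hv
    -- midpoint bound
    have hhalfmem : (1/2 : ℝ) ∈ Set.Icc (0:ℝ) 1 := by norm_num
    have hfm := hf.2 u hu v hv (1/2) hhalfmem
    have hgm := hg.2 u hu v hv (1/2) hhalfmem
    have hmid : (1/2 : ℝ) * u + (1 - 1/2) * v = (a+b)/2 := by
      simp only [u, v]; ring
    rw [hmid] at hfm hgm
    norm_num at hfm hgm
    have hFm : f ((a+b)/2) * g ((a+b)/2) ≤
        (h (1/2) ^ s * (f u + f v)) * (h (1/2) ^ s * (g u + g v)) := by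
      have h1 : f ((a+b)/2) ≤ h (1/2) ^ s * (f u + f v) := by rw [mul_add]; linarith
      have h2 : g ((a+b)/2) ≤ h (1/2) ^ s * (g u + g v) := by rw [mul_add]; linarith
      exact mul_le_mul h1 h2 (hg.1 _ ⟨by linarith, by linarith⟩)
        (by positivity)
    have hcross_uv : f u * g v + f v * g u ≤ f u * g u + f v * g v := by
      have := hso u hu v hv; nlinarith
    -- bounds of f u * g u etc
    have hfu2 := hf.2 a hmemA b hmemB t ⟨ht0, ht1⟩
    have hgu2 := hg.2 a hmemA b hmemB t ⟨ht0, ht1⟩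
    have hfv2 := hf.2 a hmemA b hmemB (1-t) ht1'
    have hgv2 := hg.2 a hmemA b hmemB (1-t) ht1'
    rw [sub_sub_cancel] at hfv2 hgv2
    have hPu : f u * g u ≤ (h t ^ s * f a + h (1-t) ^ s * f b) * (h t ^ s * g a + h (1-t) ^ s * g b) :=
      mul_le_mul hfu2 hgu2 hgu (by positivity)
    have hPv : f v * g v ≤ (h (1-t) ^ s * f a + h t ^ s * f b) * (h (1-t) ^ s * g a + h t ^ s * g b) :=
      mul_le_mul hfv2 hgv2 hgv (by positivity)
    have hcross_ab : f a * g b + f b * g a ≤ f a * g a + f b * g b := by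
      have := hso a hmemA b hmemB; nlinarith
    have hS : f u * g u + f v * g v ≤ (h t ^ s + h (1-t) ^ s)^2 * M :=
      quad_aux _ _ _ _ _ _ _ _ hA hB hPu hPv hcross_ab
    -- combine
    rw [hc0, hp, one_div, inv_mul_le_iff₀ (by positivity)]
    exact fin_aux _ _ _ _ _ _ _ _ hH hFm hcross_uv hS
  -- rewrite integrands in affine form
  have eu : ∀ t : ℝ, t*a+(1-t)*b = (a-b)*t+b := fun t => by ring
  have ev : ∀ t : ℝ, (1-t)*a+t*b = (b-a)*t+a := fun t => by ring
  have I1 : IntervalIntegrable (fun t => f ((a-b)*t+b) * g ((a-b)*t+b)) volume 0 1 := by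
    have := ((hfgint.comp_add_right b).comp_mul_left (c := a-b)).symm
    simpa [div_self hab''] using this
  have I2 : IntervalIntegrable (fun t => f ((b-a)*t+a) * g ((b-a)*t+a)) volume 0 1 := by
    have := (hfgint.comp_add_right a).comp_mul_left (c := b-a)
    simpa [div_self hab'] using this
  have Iall : IntervalIntegrable (fun t =>
      (1/2) * (f ((a-b)*t+b) * g ((a-b)*t+b) + f ((b-a)*t+a) * g ((b-a)*t+a))
        + (M/2) * (h t ^ s + h (1 - t) ^ s)^2) volume 0 1 :=
    ((I1.add I2).const_mul (1/2)).add (hhint.const_mul (M/2))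
  have hmono : ∫ _ in (0:ℝ)..1, c0 ≤ ∫ t in (0:ℝ)..1,
      ((1/2) * (f ((a-b)*t+b) * g ((a-b)*t+b) + f ((b-a)*t+a) * g ((b-a)*t+a))
        + (M/2) * (h t ^ s + h (1 - t) ^ s)^2) := by
    apply intervalIntegral.integral_mono_on (by norm_num) intervalIntegrable_const Iall
    intro t ht
    have := key t ht
    rw [eu t, ev t] at this
    exact this
  rw [intervalIntegral.integral_const] at hmono
  simp only [sub_zero, one_smul] at hmono
  rw [intervalIntegral.integral_add ((I1.add I2).const_mul (1/2)) (hhint.const_mul (M/2)),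
    intervalIntegral.integral_const_mul, intervalIntegral.integral_const_mul,
    intervalIntegral.integral_add I1 I2] at hmono
  have e1 : (∫ t in (0:ℝ)..1, f ((a-b)*t+b) * g ((a-b)*t+b))
      = (1/(b-a)) * ∫ x in a..b, f x * g x := by
    rw [intervalIntegral.integral_comp_mul_add (fun x => f x * g x) hab'' b]
    norm_num
    rw [intervalIntegral.integral_symm]
    rw [show a - b = -(b-a) by ring]
    field_simp
  have e2 : (∫ t in (0:ℝ)..1, f ((b-a)*t+a) * g ((b-a)*t+a))
      = (1/(b-a)) * ∫ x in a..b, f x * g x := by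
    rw [intervalIntegral.integral_comp_mul_add (fun x => f x * g x) hab' a]
    norm_num
  rw [e1, e2] at hmono
  rw [hc0] at hmono
  linarith
end

section
/- Let f, g: [a,b] → ℝ be nonnegative s-convex functions in the second sense that are similarly ordered, s ∈ (0,1], fg integrable. Then 2^(2s-1) f((a+b)/2) g((a+b)/2) ≤ (1/(b-a)) ∫_a^b f(x)g(x) dx + (M(a,b)/2) · (2/(1+2s) + √π · Γ(1+s)/(4^s · Γ(3/2+s))), where M(a,b) = f(a)g(a) + f(b)g(b). -/
open MeasureTheory intervalIntegral Real

lemma beta_aux (s : ℝ) (hs : 0 < s) :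
    ∫ t in (0:ℝ)..1, t ^ s * (1 - t) ^ s
      = Real.Gamma (s+1) * Real.Gamma (s+1) / Real.Gamma (2*s+2) := by
  have hre : 0 < ((s:ℂ)+1).re := by simp; linarith
  have h := Complex.Gamma_mul_Gamma_eq_betaIntegral hre hre
  have key : (((∫ t in (0:ℝ)..1, t ^ s * (1 - t) ^ s) : ℝ) : ℂ)
      = Complex.betaIntegral ((s:ℂ)+1) ((s:ℂ)+1) := by
    rw [Complex.betaIntegral, ← intervalIntegral.integral_ofReal]
    refine intervalIntegral.integral_congr fun x hx => ?_
    rw [Set.uIcc_of_le zero_le_one] at hx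
    have hx0 : (0:ℝ) ≤ x := hx.1
    have hx1 : (0:ℝ) ≤ 1 - x := by linarith [hx.2]
    have e1 : ((s:ℂ)+1-1) = (s:ℂ) := by ring
    rw [e1]
    rw [Complex.ofReal_mul, Complex.ofReal_cpow hx0, Complex.ofReal_cpow hx1]
    push_cast
    ring
  rw [← key] at h
  have e2 : ((s:ℂ)+1) = ((s+1:ℝ):ℂ) := by push_cast; ring
  have e3 : ((s:ℂ)+1) + ((s:ℂ)+1) = ((2*s+2:ℝ):ℂ) := by push_cast; ring
  rw [e3] at h
  rw [e2, Complex.Gamma_ofReal, Complex.Gamma_ofReal] at h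
  have h' : Real.Gamma (s+1) * Real.Gamma (s+1)
      = Real.Gamma (2*s+2) * ∫ t in (0:ℝ)..1, t ^ s * (1 - t) ^ s := by
    exact_mod_cast h
  have hG : Real.Gamma (2*s+2) ≠ 0 := (Real.Gamma_pos_of_pos (by linarith)).ne'
  field_simp
  rw [show (s+1)*2 = 2*s+2 by ring]; linarith [h']

lemma two_rpow_aux (s : ℝ) : (4:ℝ) ^ s = (2:ℝ) ^ (2*s) := by
  rw [show (4:ℝ) = (2:ℝ)^(2:ℕ) by norm_num, ← Real.rpow_natCast 2 2,
    ← Real.rpow_mul (by norm_num : (0:ℝ) ≤ 2)]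
  norm_num

lemma beta_val (s : ℝ) (hs : 0 < s) :
    2 * (Real.Gamma (s+1) * Real.Gamma (s+1) / Real.Gamma (2*s+2))
      = Real.sqrt π * Real.Gamma (1 + s) / ((4:ℝ) ^ s * Real.Gamma (3/2 + s)) := by
  have dup := Real.Gamma_mul_Gamma_add_half (s+1)
  rw [show s+1+1/2 = 3/2+s by ring, show 2*(s+1) = 2*s+2 by ring] at dup
  rw [show (1:ℝ)+s = s+1 by ring]
  have hG1 : 0 < Real.Gamma (s+1) := Real.Gamma_pos_of_pos (by linarith)
  have hG2 : 0 < Real.Gamma (3/2+s) := Real.Gamma_pos_of_pos (by linarith)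
  have hG3 : 0 < Real.Gamma (2*s+2) := Real.Gamma_pos_of_pos (by linarith)
  have hP : 0 < Real.sqrt π := Real.sqrt_pos.mpr Real.pi_pos
  have h4 : (0:ℝ) < (4:ℝ) ^ s := Real.rpow_pos_of_pos (by norm_num) s
  have h4s : (4:ℝ) ^ s * (2:ℝ) ^ (1-(2*s+2)) = 1/2 := by
    rw [two_rpow_aux, ← Real.rpow_add (by norm_num : (0:ℝ) < 2),
      show 2*s + (1-(2*s+2)) = -1 by ring, Real.rpow_neg_one]
    norm_num
  set G1 := Real.Gamma (s+1) with hG1d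
  set G2 := Real.Gamma (3/2+s) with hG2d
  set G3 := Real.Gamma (2*s+2) with hG3d
  set P := Real.sqrt π with hPd
  set A := (4:ℝ) ^ s with hAd
  set Q := (2:ℝ) ^ (1-(2*s+2)) with hQd
  field_simp
  linear_combination (2*A) * dup + (2*G3*P) * h4s

lemma sq_int (s : ℝ) (hs : 0 < s) :
    ∫ t in (0:ℝ)..1, (t ^ s + (1 - t) ^ s)^2
      = 2/(1 + 2*s) + Real.sqrt π * Real.Gamma (1 + s) /
          ((4:ℝ) ^ s * Real.Gamma (3/2 + s)) := by
  have hc1 : Continuous fun t : ℝ => t ^ (2*s) :=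
    Real.continuous_rpow_const (by linarith)
  have hcs : Continuous fun t : ℝ => t ^ s :=
    Real.continuous_rpow_const hs.le
  have hc2 : Continuous fun t : ℝ => (1-t) ^ (2*s) :=
    hc1.comp (continuous_const.sub continuous_id)
  have hc3 : Continuous fun t : ℝ => t ^ s * (1-t) ^ s :=
    hcs.mul (hcs.comp (continuous_const.sub continuous_id))
  have congr1 : ∫ t in (0:ℝ)..1, (t ^ s + (1 - t) ^ s)^2
      = ∫ t in (0:ℝ)..1, (t ^ (2*s) + (1-t) ^ (2*s) + 2 * (t ^ s * (1-t) ^ s)) := by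
    refine intervalIntegral.integral_congr fun x hx => ?_
    rw [Set.uIcc_of_le zero_le_one] at hx
    have hx0 : (0:ℝ) ≤ x := hx.1
    have hx1 : (0:ℝ) ≤ 1 - x := by linarith [hx.2]
    have e : ∀ y : ℝ, 0 ≤ y → (y ^ s)^2 = y ^ (2*s) := by
      intro y hy
      rw [← Real.rpow_natCast (y ^ s) 2, ← Real.rpow_mul hy]
      norm_num [mul_comm]
    have e1 := e x hx0
    have e2 := e (1-x) hx1
    nlinarith [e1, e2]
  rw [congr1]
  rw [intervalIntegral.integral_add (f := fun t => t ^ (2*s) + (1-t) ^ (2*s))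
    ((hc1.add hc2).intervalIntegrable 0 1)
    ((hc3.intervalIntegrable 0 1).const_mul 2),
    intervalIntegral.integral_add (hc1.intervalIntegrable 0 1)
    (hc2.intervalIntegrable 0 1),
    intervalIntegral.integral_const_mul]
  have i1 : ∫ t in (0:ℝ)..1, t ^ (2*s) = 1/(2*s+1) := by
    rw [integral_rpow (Or.inl (by linarith))]
    rw [Real.one_rpow, Real.zero_rpow (by linarith)]
    norm_num
  have i2 : ∫ t in (0:ℝ)..1, (1-t) ^ (2*s) = 1/(2*s+1) := by
    rw [intervalIntegral.integral_comp_sub_left (fun t => t ^ (2*s)) 1]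
    norm_num [i1]
  rw [i1, i2, beta_aux s hs, beta_val s hs]
  ring

set_option maxHeartbeats 1600000 in
theorem stmt10 (s a b : ℝ) (f g : ℝ → ℝ)
    (hs : s ∈ Set.Ioc (0:ℝ) 1) (hab : a < b)
    (hf0 : ∀ x ∈ Set.Icc a b, 0 ≤ f x) (hg0 : ∀ x ∈ Set.Icc a b, 0 ≤ g x)
    (hf : ∀ x ∈ Set.Icc a b, ∀ y ∈ Set.Icc a b, ∀ t ∈ Set.Icc (0:ℝ) 1,
      f (t * x + (1 - t) * y) ≤ t ^ s * f x + (1 - t) ^ s * f y)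
    (hg : ∀ x ∈ Set.Icc a b, ∀ y ∈ Set.Icc a b, ∀ t ∈ Set.Icc (0:ℝ) 1,
      g (t * x + (1 - t) * y) ≤ t ^ s * g x + (1 - t) ^ s * g y)
    (hso : ∀ x ∈ Set.Icc a b, ∀ y ∈ Set.Icc a b, 0 ≤ (f x - f y) * (g x - g y))
    (hfgint : IntervalIntegrable (fun x => f x * g x) volume a b) :
    (2:ℝ) ^ (2*s - 1) * (f ((a + b)/2) * g ((a + b)/2)) ≤
      (1/(b - a)) * (∫ x in a..b, f x * g x) +
      ((f a * g a + f b * g b)/2) *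
        (2/(1 + 2*s) + Real.sqrt π * Real.Gamma (1 + s) /
          ((4:ℝ) ^ s * Real.Gamma (3/2 + s))) := by
  obtain ⟨hs0, hs1⟩ := hs
  set m := (a+b)/2 with hm_def
  set M := f a * g a + f b * g b with hM_def
  set F : ℝ → ℝ := fun x => f x * g x with hF_def
  have hane : a - b ≠ 0 := sub_ne_zero.mpr hab.ne
  have hbne : b - a ≠ 0 := sub_ne_zero.mpr hab.ne'
  have ha : a ∈ Set.Icc a b := ⟨le_refl a, hab.le⟩
  have hb : b ∈ Set.Icc a b := ⟨hab.le, le_refl b⟩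
  have hm : m ∈ Set.Icc a b := ⟨by rw [hm_def]; linarith, by rw [hm_def]; linarith⟩
  -- pointwise key inequality
  have key : ∀ t ∈ Set.Icc (0:ℝ) 1,
      f m * g m ≤ ((1:ℝ)/4) ^ s *
        (F ((a-b)*t+b) + F ((b-a)*t+a) + (t ^ s + (1-t) ^ s)^2 * M) := by
    intro t ht
    obtain ⟨ht0, ht1⟩ := ht
    set u := (a-b)*t+b with hu_def
    set v := (b-a)*t+a with hv_def
    have hu : u ∈ Set.Icc a b := by
      constructor <;> [nlinarith; nlinarith]
    have hv : v ∈ Set.Icc a b := by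
      constructor <;> [nlinarith; nlinarith]
    set α := t ^ s with hα_def
    set β := (1-t) ^ s with hβ_def
    have hα : 0 ≤ α := Real.rpow_nonneg ht0 s
    have hβ : 0 ≤ β := Real.rpow_nonneg (by linarith) s
    have hhalf : (1/2 : ℝ) ∈ Set.Icc (0:ℝ) 1 := by norm_num
    have h2 : f m ≤ (1/2:ℝ) ^ s * (f u + f v) := by
      have := hf u hu v hv (1/2) hhalf
      rw [show (1/2:ℝ) * u + (1 - 1/2) * v = m by rw [hu_def, hv_def, hm_def]; ring] at this
      rw [show (1:ℝ) - 1/2 = 1/2 by norm_num] at this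
      linarith [this]
    have h3 : g m ≤ (1/2:ℝ) ^ s * (g u + g v) := by
      have := hg u hu v hv (1/2) hhalf
      rw [show (1/2:ℝ) * u + (1 - 1/2) * v = m by rw [hu_def, hv_def, hm_def]; ring] at this
      rw [show (1:ℝ) - 1/2 = 1/2 by norm_num] at this
      linarith [this]
    have hhp : (0:ℝ) ≤ (1/2:ℝ) ^ s := Real.rpow_nonneg (by norm_num) s
    have hfu := hf0 u hu; have hfv := hf0 v hv
    have hgu := hg0 u hu; have hgv := hg0 v hv
    have hfa := hf0 a ha; have hfb := hf0 b hb
    have hga := hg0 a ha; have hgb := hg0 b hb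
    have hmul : f m * g m ≤ ((1/2:ℝ) ^ s * (f u + f v)) * ((1/2:ℝ) ^ s * (g u + g v)) :=
      mul_le_mul h2 h3 (hg0 m hm) (by positivity)
    -- s-convexity at endpoints
    have h5 : f u ≤ α * f a + β * f b := by
      have := hf a ha b hb t ⟨ht0, ht1⟩
      rw [show t * a + (1-t) * b = u by rw [hu_def]; ring] at this
      exact this
    have h6 : f v ≤ α * f b + β * f a := by
      have := hf b hb a ha t ⟨ht0, ht1⟩
      rw [show t * b + (1-t) * a = v by rw [hv_def]; ring] at this
      exact this
    have h7 : g u ≤ α * g a + β * g b := by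
      have := hg a ha b hb t ⟨ht0, ht1⟩
      rw [show t * a + (1-t) * b = u by rw [hu_def]; ring] at this
      exact this
    have h8 : g v ≤ α * g b + β * g a := by
      have := hg b hb a ha t ⟨ht0, ht1⟩
      rw [show t * b + (1-t) * a = v by rw [hv_def]; ring] at this
      exact this
    have cross : f u * g v + f v * g u ≤ (α + β)^2 * M := by
      have c1 : f u * g v ≤ (α * f a + β * f b) * (α * g b + β * g a) :=
        mul_le_mul h5 h8 hgv (by positivity)
      have c2 : f v * g u ≤ (α * f b + β * f a) * (α * g a + β * g b) :=
        mul_le_mul h6 h7 hgu (by positivity)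
      have hord := hso a ha b hb
      have hkey : 0 ≤ (α^2 + β^2) * ((f a - f b) * (g a - g b)) :=
        mul_nonneg (by positivity) hord
      rw [hM_def]
      nlinarith [c1, c2, hkey]
    have hqs : (1/2:ℝ) ^ s * (1/2:ℝ) ^ s = ((1:ℝ)/4) ^ s := by
      rw [← Real.mul_rpow (by norm_num) (by norm_num)]
      norm_num
    have expand : ((1/2:ℝ) ^ s * (f u + f v)) * ((1/2:ℝ) ^ s * (g u + g v))
        = ((1:ℝ)/4) ^ s * (F u + F v + (f u * g v + f v * g u)) := by
      rw [← hqs]; simp only [hF_def]; ring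
    have hq4 : (0:ℝ) ≤ ((1:ℝ)/4) ^ s := Real.rpow_nonneg (by norm_num) s
    calc f m * g m ≤ ((1/2:ℝ) ^ s * (f u + f v)) * ((1/2:ℝ) ^ s * (g u + g v)) := hmul
      _ = ((1:ℝ)/4) ^ s * (F u + F v + (f u * g v + f v * g u)) := expand
      _ ≤ ((1:ℝ)/4) ^ s * (F u + F v + (α + β)^2 * M) := by
          apply mul_le_mul_of_nonneg_left _ hq4
          linarith [cross]
  -- integrability of the pieces
  have hFa : IntervalIntegrable (fun t => F ((a-b)*t+b)) volume 0 1 := by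
    have h1 := (hfgint.comp_add_right b).comp_mul_left (c := a-b)
    rw [div_self hane, show (b-b)/(a-b) = 0 by simp] at h1
    exact h1.symm
  have hFb : IntervalIntegrable (fun t => F ((b-a)*t+a)) volume 0 1 := by
    have h1 := (hfgint.comp_add_right a).comp_mul_left (c := b-a)
    rw [div_self hbne, show (a-a)/(b-a) = 0 by simp] at h1
    exact h1
  have hcs : Continuous fun t : ℝ => t ^ s := Real.continuous_rpow_const hs0.le
  have hcsq : Continuous fun t : ℝ => (t ^ s + (1-t) ^ s)^2 :=
    (hcs.add (hcs.comp (continuous_const.sub continuous_id))).pow 2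
  have hR : IntervalIntegrable (fun t => ((1:ℝ)/4) ^ s *
      (F ((a-b)*t+b) + F ((b-a)*t+a) + (t ^ s + (1-t) ^ s)^2 * M)) volume 0 1 :=
    (((hFa.add hFb).add ((hcsq.intervalIntegrable 0 1).mul_const M)).const_mul _)
  -- integrate
  have mono := intervalIntegral.integral_mono_on (le_of_lt zero_lt_one)
    (_root_.intervalIntegrable_const (c := f m * g m)) hR key
  rw [intervalIntegral.integral_const, sub_zero, one_smul] at mono
  rw [intervalIntegral.integral_const_mul,
    intervalIntegral.integral_add (hFa.add hFb) ((hcsq.intervalIntegrable 0 1).mul_const M),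
    intervalIntegral.integral_add hFa hFb,
    intervalIntegral.integral_mul_const] at mono
  have iFa : ∫ t in (0:ℝ)..1, F ((a-b)*t+b) = (1/(b-a)) * ∫ x in a..b, F x := by
    rw [intervalIntegral.integral_comp_mul_add F hane b]
    rw [show (a-b)*0+b = b by ring, show (a-b)*1+b = a by ring]
    rw [intervalIntegral.integral_symm a b]
    rw [smul_eq_mul, show a - b = -(b-a) by ring, inv_neg, one_div]
    ring
  have iFb : ∫ t in (0:ℝ)..1, F ((b-a)*t+a) = (1/(b-a)) * ∫ x in a..b, F x := by
    rw [intervalIntegral.integral_comp_mul_add F hbne a]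
    rw [show (b-a)*0+a = a by ring, show (b-a)*1+a = b by ring]
    rw [smul_eq_mul, one_div]
  rw [iFa, iFb, sq_int s hs0] at mono
  -- final arithmetic
  have h4s : (2:ℝ) ^ (2*s-1) * ((1:ℝ)/4) ^ s = 1/2 := by
    rw [one_div, Real.inv_rpow (by norm_num : (0:ℝ) ≤ 4), two_rpow_aux,
      ← Real.rpow_neg (by norm_num : (0:ℝ) ≤ 2),
      ← Real.rpow_add (by norm_num : (0:ℝ) < 2),
      show 2*s - 1 + -(2*s) = -1 by ring, Real.rpow_neg_one]
    norm_num
  have hpow : (0:ℝ) ≤ (2:ℝ) ^ (2*s-1) := (Real.rpow_pos_of_pos (by norm_num) _).le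
  calc (2:ℝ) ^ (2*s - 1) * (f m * g m)
      ≤ (2:ℝ) ^ (2*s - 1) * (((1:ℝ)/4) ^ s *
        ((1/(b-a)) * (∫ x in a..b, F x) + (1/(b-a)) * (∫ x in a..b, F x) +
          (2/(1 + 2*s) + Real.sqrt π * Real.Gamma (1 + s) /
            ((4:ℝ) ^ s * Real.Gamma (3/2 + s))) * M)) :=
        mul_le_mul_of_nonneg_left mono hpow
    _ = (1/(b - a)) * (∫ x in a..b, F x) +
        (M/2) * (2/(1 + 2*s) + Real.sqrt π * Real.Gamma (1 + s) /
          ((4:ℝ) ^ s * Real.Gamma (3/2 + s))) := by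
        rw [← mul_assoc, h4s]; ring
end

section
/- Let f, g be (h-s)₂-convex and similarly ordered on [a,b], h nonnegative super-multiplicative, s ∈ (0,1], with f, g, fg integrable on [a,b] and the h-compositions integrable on [0,1]. Then (g(b)/(b-a)) ∫_a^b h((x-a)/(b-a))^s f(x) dx + (g(a)/(b-a)) ∫_a^b h((b-x)/(b-a))^s f(x) dx + (f(b)/(b-a)) ∫_a^b h((x-a)/(b-a))^s g(x) dx + (f(a)/(b-a)) ∫_a^b h((b-x)/(b-a))^s g(x) dx ≤ (1/(b-a)) ∫_a^b f(x)g(x) dx + f(b)g(b) ∫_0^1 [h(t-t²)^s + h(t²)^s] dt + f(a)g(a) ∫_0^1 [h((1-t)²)^s + h(t-t²)^s] dt. -/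
open MeasureTheory intervalIntegral

set_option maxHeartbeats 1000000 in
theorem stmt11 (h : ℝ → ℝ) (s a b : ℝ) (f g : ℝ → ℝ)
    (hh0 : ∀ t ∈ Set.Icc (0:ℝ) 1, 0 ≤ h t) (hhne : h ≠ 0)
    (hsm : ∀ x ∈ Set.Icc (0:ℝ) 1, ∀ y ∈ Set.Icc (0:ℝ) 1, h x * h y ≤ h (x * y))
    (hs : s ∈ Set.Ioc (0:ℝ) 1) (hab : a < b)
    (hf : HS2ConvexOn h s (Set.Icc a b) f) (hg : HS2ConvexOn h s (Set.Icc a b) g)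
    (hso : SimilarlyOrdered (Set.Icc a b) f g)
    (hfint : IntervalIntegrable f volume a b) (hgint : IntervalIntegrable g volume a b)
    (hfgint : IntervalIntegrable (fun x => f x * g x) volume a b)
    (hi1 : IntervalIntegrable (fun x => h ((x - a)/(b - a)) ^ s * f x) volume a b)
    (hi2 : IntervalIntegrable (fun x => h ((b - x)/(b - a)) ^ s * f x) volume a b)
    (hi3 : IntervalIntegrable (fun x => h ((x - a)/(b - a)) ^ s * g x) volume a b)
    (hi4 : IntervalIntegrable (fun x => h ((b - x)/(b - a)) ^ s * g x) volume a b)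
    (hh1 : IntervalIntegrable (fun t => h (t - t^2) ^ s + h (t^2) ^ s) volume 0 1)
    (hh2 : IntervalIntegrable (fun t => h ((1 - t)^2) ^ s + h (t - t^2) ^ s) volume 0 1) :
    (g b/(b - a)) * (∫ x in a..b, h ((x - a)/(b - a)) ^ s * f x) +
    (g a/(b - a)) * (∫ x in a..b, h ((b - x)/(b - a)) ^ s * f x) +
    (f b/(b - a)) * (∫ x in a..b, h ((x - a)/(b - a)) ^ s * g x) +
    (f a/(b - a)) * (∫ x in a..b, h ((b - x)/(b - a)) ^ s * g x) ≤
      (1/(b - a)) * (∫ x in a..b, f x * g x) +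
      f b * g b * (∫ t in (0:ℝ)..1, (h (t - t^2) ^ s + h (t^2) ^ s)) +
      f a * g a * (∫ t in (0:ℝ)..1, (h ((1 - t)^2) ^ s + h (t - t^2) ^ s)) := by
  obtain ⟨hs0, hs1⟩ := hs
  set c := b - a with hc
  have hcpos : 0 < c := sub_pos.2 hab
  have hcne : c ≠ 0 := ne_of_gt hcpos
  have hamem : a ∈ Set.Icc a b := ⟨le_refl a, le_of_lt hab⟩
  have hbmem : b ∈ Set.Icc a b := ⟨le_of_lt hab, le_refl b⟩
  -- substitution formula
  have comp_eq : ∀ F : ℝ → ℝ, (∫ x in a..b, F x) = c * ∫ t in (0:ℝ)..1, F (c * t + a) := by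
    intro F
    rw [intervalIntegral.integral_comp_mul_add F hcne a]
    rw [smul_eq_mul, ← mul_assoc, mul_inv_cancel₀ hcne, one_mul]
    congr 1 <;> ring
  have compInt : ∀ F : ℝ → ℝ, IntervalIntegrable F volume a b →
      IntervalIntegrable (fun t => F (c * t + a)) volume 0 1 := by
    intro F hF
    have h1 := hF.comp_add_right a
    have h2 := h1.comp_mul_left (c := c)
    have e0 : (a - a) / c = 0 := by simp
    have e1 : (b - a) / c = 1 := by rw [← hc]; exact div_self hcne
    rw [e0, e1] at h2
    exact h2
  -- integrand simplifications
  have earg1 : ∀ t : ℝ, (c * t + a - a) / c = t := by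
    intro t; rw [div_eq_iff hcne]; ring
  have earg2 : ∀ t : ℝ, (b - (c * t + a)) / c = 1 - t := by
    intro t; rw [div_eq_iff hcne, hc]; ring
  have ef1 : (fun t : ℝ => h ((c * t + a - a) / c) ^ s * f (c * t + a))
      = fun t => h t ^ s * f (c * t + a) := by funext t; rw [earg1]
  have ef2 : (fun t : ℝ => h ((b - (c * t + a)) / c) ^ s * f (c * t + a))
      = fun t => h (1 - t) ^ s * f (c * t + a) := by funext t; rw [earg2]
  have eg1 : (fun t : ℝ => h ((c * t + a - a) / c) ^ s * g (c * t + a))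
      = fun t => h t ^ s * g (c * t + a) := by funext t; rw [earg1]
  have eg2 : (fun t : ℝ => h ((b - (c * t + a)) / c) ^ s * g (c * t + a))
      = fun t => h (1 - t) ^ s * g (c * t + a) := by funext t; rw [earg2]
  -- composed integrabilities
  have j1 : IntervalIntegrable (fun t => h t ^ s * f (c * t + a)) volume 0 1 := by
    have := compInt _ hi1; rwa [show (fun t => (fun x => h ((x - a)/c) ^ s * f x) (c * t + a)) = fun t : ℝ => h ((c * t + a - a) / c) ^ s * f (c * t + a) from rfl, ef1] at this
  have j2 : IntervalIntegrable (fun t => h (1 - t) ^ s * f (c * t + a)) volume 0 1 := by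
    have := compInt _ hi2; rwa [show (fun t => (fun x => h ((b - x)/c) ^ s * f x) (c * t + a)) = fun t : ℝ => h ((b - (c * t + a)) / c) ^ s * f (c * t + a) from rfl, ef2] at this
  have j3 : IntervalIntegrable (fun t => h t ^ s * g (c * t + a)) volume 0 1 := by
    have := compInt _ hi3; rwa [show (fun t => (fun x => h ((x - a)/c) ^ s * g x) (c * t + a)) = fun t : ℝ => h ((c * t + a - a) / c) ^ s * g (c * t + a) from rfl, eg1] at this
  have j4 : IntervalIntegrable (fun t => h (1 - t) ^ s * g (c * t + a)) volume 0 1 := by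
    have := compInt _ hi4; rwa [show (fun t => (fun x => h ((b - x)/c) ^ s * g x) (c * t + a)) = fun t : ℝ => h ((b - (c * t + a)) / c) ^ s * g (c * t + a) from rfl, eg2] at this
  have jfg : IntervalIntegrable (fun t => f (c * t + a) * g (c * t + a)) volume 0 1 :=
    compInt _ hfgint
  -- integrability of LHS and RHS integrands
  have Lint : IntervalIntegrable (fun t =>
      g b * (h t ^ s * f (c * t + a)) + g a * (h (1 - t) ^ s * f (c * t + a)) +
      f b * (h t ^ s * g (c * t + a)) + f a * (h (1 - t) ^ s * g (c * t + a))) volume 0 1 :=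
    (((j1.const_mul (g b)).add (j2.const_mul (g a))).add (j3.const_mul (f b))).add
      (j4.const_mul (f a))
  have Rint : IntervalIntegrable (fun t =>
      f (c * t + a) * g (c * t + a) + f b * g b * (h (t - t^2) ^ s + h (t^2) ^ s) +
      f a * g a * (h ((1 - t)^2) ^ s + h (t - t^2) ^ s)) volume 0 1 :=
    (jfg.add (hh1.const_mul (f b * g b))).add (hh2.const_mul (f a * g a))
  -- pointwise inequality
  have ptwise : ∀ t ∈ Set.Icc (0:ℝ) 1,
      g b * (h t ^ s * f (c * t + a)) + g a * (h (1 - t) ^ s * f (c * t + a)) +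
      f b * (h t ^ s * g (c * t + a)) + f a * (h (1 - t) ^ s * g (c * t + a)) ≤
      f (c * t + a) * g (c * t + a) + f b * g b * (h (t - t^2) ^ s + h (t^2) ^ s) +
      f a * g a * (h ((1 - t)^2) ^ s + h (t - t^2) ^ s) := by
    intro t ht
    obtain ⟨ht0, ht1⟩ := ht
    have humem : c * t + a ∈ Set.Icc a b := by
      constructor
      · nlinarith
      · rw [hc]; nlinarith
    have huu : t * b + (1 - t) * a = c * t + a := by rw [hc]; ring
    have hfu := hf.2 b hbmem a hamem t ⟨ht0, ht1⟩
    rw [huu] at hfu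
    have hgu := hg.2 b hbmem a hamem t ⟨ht0, ht1⟩
    rw [huu] at hgu
    have hfa := hf.1 a hamem
    have hfb := hf.1 b hbmem
    have hga := hg.1 a hamem
    have hgb := hg.1 b hbmem
    have hfuu := hf.1 _ humem
    have hguu := hg.1 _ humem
    have htm : t ∈ Set.Icc (0:ℝ) 1 := ⟨ht0, ht1⟩
    have htm' : 1 - t ∈ Set.Icc (0:ℝ) 1 := ⟨by linarith, by linarith⟩
    have hA : 0 ≤ h t := hh0 t htm
    have hB : 0 ≤ h (1 - t) := hh0 _ htm'
    have hAs : 0 ≤ h t ^ s := Real.rpow_nonneg hA s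
    have hBs : 0 ≤ h (1 - t) ^ s := Real.rpow_nonneg hB s
    have m1 : h t * h t ≤ h (t ^ 2) := by
      have := hsm t htm t htm
      rwa [show t * t = t ^ 2 by ring] at this
    have m2 : h (1 - t) * h (1 - t) ≤ h ((1 - t) ^ 2) := by
      have := hsm _ htm' _ htm'
      rwa [show (1 - t) * (1 - t) = (1 - t) ^ 2 by ring] at this
    have m3 : h t * h (1 - t) ≤ h (t - t ^ 2) := by
      have := hsm t htm _ htm'
      rwa [show t * (1 - t) = t - t ^ 2 by ring] at this
    have m1s : h t ^ s * h t ^ s ≤ h (t ^ 2) ^ s := by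
      rw [← Real.mul_rpow hA hA]
      exact Real.rpow_le_rpow (mul_nonneg hA hA) m1 hs0.le
    have m2s : h (1 - t) ^ s * h (1 - t) ^ s ≤ h ((1 - t) ^ 2) ^ s := by
      rw [← Real.mul_rpow hB hB]
      exact Real.rpow_le_rpow (mul_nonneg hB hB) m2 hs0.le
    have m3s : h t ^ s * h (1 - t) ^ s ≤ h (t - t ^ 2) ^ s := by
      rw [← Real.mul_rpow hA hB]
      exact Real.rpow_le_rpow (mul_nonneg hA hB) m3 hs0.le
    have hord := hso b hbmem a hamem
    have key3 : 0 ≤ (h t ^ s * f b + h (1 - t) ^ s * f a - f (c * t + a)) *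
        (h t ^ s * g b + h (1 - t) ^ s * g a - g (c * t + a)) := by
      apply mul_nonneg <;> linarith
    have p1 : h t ^ s * h t ^ s * (f b * g b) ≤ h (t ^ 2) ^ s * (f b * g b) :=
      mul_le_mul_of_nonneg_right m1s (mul_nonneg hfb hgb)
    have p2 : h (1 - t) ^ s * h (1 - t) ^ s * (f a * g a) ≤ h ((1 - t) ^ 2) ^ s * (f a * g a) :=
      mul_le_mul_of_nonneg_right m2s (mul_nonneg hfa hga)
    have p3 : h t ^ s * h (1 - t) ^ s * (f b * g a + f a * g b) ≤
        h (t - t ^ 2) ^ s * (f a * g a + f b * g b) := by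
      have step1 : f b * g a + f a * g b ≤ f a * g a + f b * g b := by nlinarith
      calc h t ^ s * h (1 - t) ^ s * (f b * g a + f a * g b)
          ≤ h t ^ s * h (1 - t) ^ s * (f a * g a + f b * g b) :=
            mul_le_mul_of_nonneg_left step1 (mul_nonneg hAs hBs)
        _ ≤ h (t - t ^ 2) ^ s * (f a * g a + f b * g b) :=
            mul_le_mul_of_nonneg_right m3s (by positivity)
    nlinarith [key3, p1, p2, p3]
  have key := intervalIntegral.integral_mono_on (by norm_num : (0:ℝ) ≤ 1) Lint Rint ptwise
  rw [intervalIntegral.integral_add (((j1.const_mul (g b)).add (j2.const_mul (g a))).add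
        (j3.const_mul (f b))) (j4.const_mul (f a)),
      intervalIntegral.integral_add ((j1.const_mul (g b)).add (j2.const_mul (g a)))
        (j3.const_mul (f b)),
      intervalIntegral.integral_add (j1.const_mul (g b)) (j2.const_mul (g a)),
      intervalIntegral.integral_add (jfg.add (hh1.const_mul (f b * g b)))
        (hh2.const_mul (f a * g a)),
      intervalIntegral.integral_add jfg (hh1.const_mul (f b * g b)),
      intervalIntegral.integral_const_mul, intervalIntegral.integral_const_mul,
      intervalIntegral.integral_const_mul, intervalIntegral.integral_const_mul,
      intervalIntegral.integral_const_mul, intervalIntegral.integral_const_mul] at key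
  -- rewrite the x-integrals as t-integrals
  have S1 : (∫ x in a..b, h ((x - a) / c) ^ s * f x)
      = c * ∫ t in (0:ℝ)..1, h t ^ s * f (c * t + a) := by
    rw [comp_eq (fun x => h ((x - a) / c) ^ s * f x)]
    congr 1
    exact congrArg (fun F => intervalIntegral F 0 1 volume) ef1
  have S2 : (∫ x in a..b, h ((b - x) / c) ^ s * f x)
      = c * ∫ t in (0:ℝ)..1, h (1 - t) ^ s * f (c * t + a) := by
    rw [comp_eq (fun x => h ((b - x) / c) ^ s * f x)]
    congr 1
    exact congrArg (fun F => intervalIntegral F 0 1 volume) ef2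
  have S3 : (∫ x in a..b, h ((x - a) / c) ^ s * g x)
      = c * ∫ t in (0:ℝ)..1, h t ^ s * g (c * t + a) := by
    rw [comp_eq (fun x => h ((x - a) / c) ^ s * g x)]
    congr 1
    exact congrArg (fun F => intervalIntegral F 0 1 volume) eg1
  have S4 : (∫ x in a..b, h ((b - x) / c) ^ s * g x)
      = c * ∫ t in (0:ℝ)..1, h (1 - t) ^ s * g (c * t + a) := by
    rw [comp_eq (fun x => h ((b - x) / c) ^ s * g x)]
    congr 1
    exact congrArg (fun F => intervalIntegral F 0 1 volume) eg2
  have S5 : (∫ x in a..b, f x * g x)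
      = c * ∫ t in (0:ℝ)..1, f (c * t + a) * g (c * t + a) :=
    comp_eq (fun x => f x * g x)
  rw [S1, S2, S3, S4, S5]
  have hexp : ∀ r I : ℝ, r / c * (c * I) = r * I := by
    intro r I; field_simp
  rw [hexp, hexp, hexp, hexp, show (1 : ℝ) / c * (c * ∫ t in (0:ℝ)..1, f (c * t + a) * g (c * t + a)) = ∫ t in (0:ℝ)..1, f (c * t + a) * g (c * t + a) by field_simp]
  linarith [key]
end

section
/- The function f: [2,4] → ℝ, f(x) = ln x, satisfies: there exists s ∈ (0,1] such that for all x, y ∈ [2,4] and t ∈ [0,1], ln(tx + (1-t)y) ≤ t^s ln x + (1-t)^s ln y; i.e., f is (h-s)₂-convex with h(t) = t, even though f is concave (not convex). -/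
lemma stmt19_aux (A B L : ℝ) (hA0 : 0 ≤ A) (hB0 : 0 ≤ B)
    (h : A^2 + B^2 = 1) (hL : (0.6931:ℝ) ≤ L) :
    (A*B)^2 ≤ (A + B - 1) * L := by
  have hAB0 : 0 ≤ A * B := mul_nonneg hA0 hB0
  have hABle : A * B ≤ 1/2 := by nlinarith [sq_nonneg (A - B)]
  have hsum : A + B ≤ 3/2 := by nlinarith [sq_nonneg (A + B)]
  have hAB1 : 0 ≤ A + B - 1 := by nlinarith [sq_nonneg (A + B)]
  have h5 : 2 * (A*B) ≤ (A + B - 1) * (5/2) := by nlinarith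
  have h6 : (A + B - 1) * 0.6931 ≤ (A + B - 1) * L :=
    mul_le_mul_of_nonneg_left hL hAB1
  nlinarith [mul_le_mul_of_nonneg_right hABle hAB0]

theorem stmt19 :
    ∃ s ∈ Set.Ioc (0:ℝ) 1,
      ∀ x ∈ Set.Icc (2:ℝ) 4, ∀ y ∈ Set.Icc (2:ℝ) 4, ∀ t ∈ Set.Icc (0:ℝ) 1,
        Real.log (t * x + (1 - t) * y) ≤
          t ^ s * Real.log x + (1 - t) ^ s * Real.log y := by
  refine ⟨1/2, ⟨by norm_num, by norm_num⟩, ?_⟩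
  rintro x ⟨hx2, hx4⟩ y ⟨hy2, hy4⟩ t ⟨ht0, ht1⟩
  have h1t : (0:ℝ) ≤ 1 - t := by linarith
  set m := t * x + (1 - t) * y with hm
  clear_value m
  have hm2 : 2 ≤ m := by nlinarith
  have hm4 : m ≤ 4 := by nlinarith
  have hmpos : (0:ℝ) < m := by linarith
  -- Lemma A: tangent-type lower bound for log
  have lA : ∀ z : ℝ, 2 ≤ z → z ≤ 4 →
      Real.log m + (z - m)/m - (z - m)^2/4 ≤ Real.log z := by
    intro z hz2 hz4
    have hz : (0:ℝ) < z := by linarith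
    have h1 : Real.log (m / z) ≤ m / z - 1 :=
      Real.log_le_sub_one_of_pos (by positivity)
    have h2 : Real.log (m / z) = Real.log m - Real.log z :=
      Real.log_div (by linarith) (by linarith)
    have h3 : Real.log m + 1 - m / z ≤ Real.log z := by rw [h2] at h1; linarith
    have hmz : 4 ≤ m * z := by nlinarith
    have key : (z - m)/m - (z - m)^2/4 ≤ 1 - m / z := by
      have e : (1 - m/z) - ((z - m)/m - (z - m)^2/4)
          = (z - m)^2 * (m * z - 4) / (4 * m * z) := by
        field_simp
        ring
      have h0 : 0 ≤ (1 - m/z) - ((z - m)/m - (z - m)^2/4) := by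
        rw [e]
        apply div_nonneg
        · exact mul_nonneg (sq_nonneg _) (by linarith)
        · positivity
      linarith
    linarith
  have hAx := lA x hx2 hx4
  have hAy := lA y hy2 hy4
  have hax := mul_le_mul_of_nonneg_left hAx ht0
  have hay := mul_le_mul_of_nonneg_left hAy h1t
  have e0 : t * ((x - m)/m) + (1 - t) * ((y - m)/m) = 0 := by
    have h0 : t * (x - m) + (1 - t) * (y - m) = 0 := by rw [hm]; ring
    calc t * ((x - m)/m) + (1 - t) * ((y - m)/m)
        = (t * (x - m) + (1 - t) * (y - m)) / m := by ring
      _ = 0 := by rw [h0]; simp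
  have e2 : t * ((x - m)^2/4) + (1 - t) * ((y - m)^2/4)
      = t * (1 - t) * (x - y)^2 / 4 := by rw [hm]; ring
  have hd4 : t * (1 - t) * (x - y)^2 / 4 ≤ t * (1 - t) := by
    have h1 : (x - y)^2 ≤ 4 := by nlinarith
    have h2 : 0 ≤ t * (1 - t) := mul_nonneg ht0 h1t
    nlinarith
  have gap : Real.log m ≤ t * Real.log x + (1 - t) * Real.log y + t * (1 - t) := by
    nlinarith [hax, hay, e0, e2, hd4]
  -- now the sqrt part
  set A := Real.sqrt t with hA
  set B := Real.sqrt (1 - t) with hB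
  have hA0 : 0 ≤ A := Real.sqrt_nonneg _
  have hB0 : 0 ≤ B := Real.sqrt_nonneg _
  have hA2 : A^2 = t := Real.sq_sqrt ht0
  have hB2 : B^2 = 1 - t := Real.sq_sqrt h1t
  have hA1 : A ≤ 1 := by
    rw [hA]; exact Real.sqrt_le_one.mpr ht1
  have hB1 : B ≤ 1 := by
    rw [hB]; exact Real.sqrt_le_one.mpr (by linarith)
  have htA : t ≤ A :=
    calc t = A^2 := hA2.symm
    _ = A * A := sq A
    _ ≤ 1 * A := mul_le_mul_of_nonneg_right hA1 hA0
    _ = A := one_mul A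
  have htB : 1 - t ≤ B :=
    calc 1 - t = B^2 := hB2.symm
    _ = B * B := sq B
    _ ≤ 1 * B := mul_le_mul_of_nonneg_right hB1 hB0
    _ = B := one_mul B
  clear_value A B
  have hlog2 : (0.6931:ℝ) ≤ Real.log 2 := by
    have := Real.log_two_gt_d9; linarith
  have hkey0 : (A*B)^2 ≤ (A + B - 1) * Real.log 2 :=
    stmt19_aux A B (Real.log 2) hA0 hB0 (by rw [hA2, hB2]; ring) hlog2
  have hkey : t * (1 - t) ≤ (A + B - 1) * Real.log 2 := by
    have e : t * (1 - t) = (A*B)^2 := by rw [← hB2, ← hA2]; ring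
    linarith [hkey0]
  -- log bounds
  have hlx : Real.log 2 ≤ Real.log x := Real.log_le_log (by norm_num) hx2
  have hly : Real.log 2 ≤ Real.log y := Real.log_le_log (by norm_num) hy2
  have hsx : (A - t) * Real.log 2 ≤ (A - t) * Real.log x :=
    mul_le_mul_of_nonneg_left hlx (by linarith)
  have hsy : (B - (1 - t)) * Real.log 2 ≤ (B - (1 - t)) * Real.log y :=
    mul_le_mul_of_nonneg_left hly (by linarith)
  have hpowA : t ^ ((1:ℝ)/2) = A := by rw [hA, Real.sqrt_eq_rpow]
  have hpowB : (1 - t) ^ ((1:ℝ)/2) = B := by rw [hB, Real.sqrt_eq_rpow]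
  have hmain : Real.log m ≤ A * Real.log x + B * Real.log y := by
    linarith [gap, hkey, hsx, hsy]
  rw [hpowA, hpowB]
  exact hmain
end
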